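/- arXiv:1404.2336 — 4 statements merged into one kernel-verified Lean document; each statement's English description precedes it below -/
import Mathlib

section
/- Let m ≥ 1 and let F, G : (ℝ∖{0})^m → ℂ be smooth functions having x-types (Z_F : F₁,…,F_m) and (Z_G : G₁,…,G_m) respectively, with constants (C_I^F) and (C_I^G), where all the functions Z_F, Z_G, F_i, G_i are nonnegative. Then the product FG has x-type (Z_F·Z_G : F₁+G₁,…,F_m+G_m); that is, for every multi-index I = (i₁,…,i_m) there is a constant C, depending only on I and the constants (C_I^F), (C_I^G), such that |x₁^{i₁}⋯x_m^{i_m} ∂_{x₁}^{i₁}⋯∂_{x_m}^{i_m} (F·G)(x)| ≤ C · Z_F(x)Z_G(x) · (F₁(x)+G₁(x))^{i₁}⋯(F_m(x)+G_m(x))^{i_m} for all x ∈ (ℝ∖{0})^m. -/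
open scoped BigOperators

/-- Partial derivative of a function of `m` real variables in the `k`-th coordinate
direction. -/
noncomputable def pderiv' {m : ℕ} {E : Type} [NormedAddCommGroup E] [NormedSpace ℝ E]
    (k : Fin m) (F : (Fin m → ℝ) → E) : (Fin m → ℝ) → E :=
  fun x => fderiv ℝ F x (Pi.single k 1)

/-- Multi-index partial derivative `∂_{x₁}^{i₁} ⋯ ∂_{x_m}^{i_m} F`. -/
noncomputable def multiPDeriv {m : ℕ} {E : Type} [NormedAddCommGroup E] [NormedSpace ℝ E]
    (I : Fin m → ℕ) (F : (Fin m → ℝ) → E) : (Fin m → ℝ) → E :=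
  (List.finRange m).foldr (fun k G => (pderiv' k)^[I k] G) F

/-- `F` has `x`-type `(Z : F₁, …, F_m)` on `U` with constants `C I`. -/
def HasXType {m : ℕ} {E : Type} [NormedAddCommGroup E] [NormedSpace ℝ E]
    (U : Set (Fin m → ℝ)) (F : (Fin m → ℝ) → E)
    (Z : (Fin m → ℝ) → ℝ) (Fs : Fin m → (Fin m → ℝ) → ℝ)
    (C : (Fin m → ℕ) → ℝ) : Prop :=
  ∀ I : Fin m → ℕ, ∀ x ∈ U,
    (∏ i, |x i| ^ (I i)) * ‖multiPDeriv I F x‖ ≤ C I * Z x * ∏ i, (Fs i x) ^ (I i)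

noncomputable def Dl {m : ℕ} (L : List (Fin m)) (J : Fin m → ℕ) (f : (Fin m → ℝ) → ℂ) :
    (Fin m → ℝ) → ℂ :=
  L.foldr (fun k G => (pderiv' k)^[J k] G) f

section auxleib
variable {m : ℕ} {U : Set (Fin m → ℝ)}

variable {m : ℕ} {U : Set (Fin m → ℝ)}

lemma aux_diffAt (hU : IsOpen U) {f : (Fin m → ℝ) → ℂ} (hf : ContDiffOn ℝ (⊤ : ℕ∞) f U)
    {x : Fin m → ℝ} (hx : x ∈ U) : DifferentiableAt ℝ f x :=
  (hf.differentiableOn (by simp)).differentiableAt (hU.mem_nhds hx)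

lemma aux_cd_pderiv' (hU : IsOpen U) (k : Fin m) {f : (Fin m → ℝ) → ℂ}
    (hf : ContDiffOn ℝ (⊤ : ℕ∞) f U) : ContDiffOn ℝ (⊤ : ℕ∞) (pderiv' k f) U :=
  (ContinuousLinearMap.apply ℝ ℂ (Pi.single k 1 : Fin m → ℝ)).contDiff.comp_contDiffOn
    (hf.fderiv_of_isOpen hU (by simp))

lemma aux_cd_iter (hU : IsOpen U) (k : Fin m) (n : ℕ) {f : (Fin m → ℝ) → ℂ}
    (hf : ContDiffOn ℝ (⊤ : ℕ∞) f U) : ContDiffOn ℝ (⊤ : ℕ∞) ((pderiv' k)^[n] f) U := by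
  induction n generalizing f with
  | zero => exact hf
  | succ n IH => rw [Function.iterate_succ_apply]; exact IH (aux_cd_pderiv' hU k hf)

lemma pderiv'_congr (hU : IsOpen U) (k : Fin m) {f g : (Fin m → ℝ) → ℂ}
    (h : ∀ y ∈ U, f y = g y) {x : Fin m → ℝ} (hx : x ∈ U) :
    pderiv' k f x = pderiv' k g x := by
  have : f =ᶠ[nhds x] g := Filter.eventuallyEq_of_mem (hU.mem_nhds hx) h
  simp only [pderiv', this.fderiv_eq]

lemma iter_congr (hU : IsOpen U) (k : Fin m) (n : ℕ) {f g : (Fin m → ℝ) → ℂ}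
    (h : ∀ y ∈ U, f y = g y) : ∀ x ∈ U, (pderiv' k)^[n] f x = (pderiv' k)^[n] g x := by
  induction n with
  | zero => exact h
  | succ n IH =>
    intro x hx
    rw [Function.iterate_succ_apply', Function.iterate_succ_apply']
    exact pderiv'_congr hU k IH hx

lemma pderiv'_mul (k : Fin m) {f g : (Fin m → ℝ) → ℂ} {x : Fin m → ℝ}
    (hf : DifferentiableAt ℝ f x) (hg : DifferentiableAt ℝ g x) :
    pderiv' k (fun y => f y * g y) x = pderiv' k f x * g x + f x * pderiv' k g x := by
  simp only [pderiv', fderiv_fun_mul hf hg, ContinuousLinearMap.add_apply,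
    ContinuousLinearMap.smul_apply, smul_eq_mul]
  ring

lemma pderiv'_sum_smul (k : Fin m) {ι : Type} (s : Finset ι) (c : ι → ℂ)
    (h : ι → (Fin m → ℝ) → ℂ) {x : Fin m → ℝ}
    (hd : ∀ j ∈ s, DifferentiableAt ℝ (h j) x) :
    pderiv' k (fun y => ∑ j ∈ s, c j * h j y) x = ∑ j ∈ s, c j * pderiv' k (h j) x := by
  simp only [pderiv']
  rw [fderiv_fun_sum (fun j hj => ((hd j hj).const_mul (c j))), ContinuousLinearMap.sum_apply]
  refine Finset.sum_congr rfl fun j hj => ?_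
  rw [fderiv_const_mul (hd j hj), ContinuousLinearMap.smul_apply, smul_eq_mul]

lemma iter_sum_smul (hU : IsOpen U) (k : Fin m) (n : ℕ) {ι : Type} (s : Finset ι) (c : ι → ℂ)
    (h : ι → (Fin m → ℝ) → ℂ) (hcd : ∀ j ∈ s, ContDiffOn ℝ (⊤ : ℕ∞) (h j) U) :
    ∀ x ∈ U, (pderiv' k)^[n] (fun y => ∑ j ∈ s, c j * h j y) x
      = ∑ j ∈ s, c j * (pderiv' k)^[n] (h j) x := by
  induction n with
  | zero => intro x hx; simp
  | succ n IH =>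
    intro x hx
    rw [Function.iterate_succ_apply', pderiv'_congr hU k IH hx,
      pderiv'_sum_smul k s c _ (fun j hj => aux_diffAt hU (aux_cd_iter hU k n (hcd j hj)) hx)]
    refine Finset.sum_congr rfl fun j hj => ?_
    rw [Function.iterate_succ_apply']

lemma leib1 (hU : IsOpen U) (k : Fin m) (n : ℕ) :
    ∃ c : ℕ → ℕ, ∀ f g : (Fin m → ℝ) → ℂ, ContDiffOn ℝ (⊤ : ℕ∞) f U → ContDiffOn ℝ (⊤ : ℕ∞) g U →
      ∀ x ∈ U, (pderiv' k)^[n] (fun y => f y * g y) x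
        = ∑ j ∈ Finset.range (n+1),
            (c j : ℂ) * ((pderiv' k)^[j] f x * (pderiv' k)^[n - j] g x) := by
  induction n with
  | zero => exact ⟨fun _ => 1, by intro f g hf hg x hx; simp⟩
  | succ n IH =>
    obtain ⟨c, hc⟩ := IH
    refine ⟨fun j => (if j ≤ n then c j else 0) + (if 1 ≤ j then c (j-1) else 0), ?_⟩
    intro f g hf hg x hx
    rw [Function.iterate_succ_apply', pderiv'_congr hU k (hc f g hf hg) hx,
      pderiv'_sum_smul k _ _ (fun j => fun y => (pderiv' k)^[j] f y * (pderiv' k)^[n-j] g y)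
        (fun j _ => ((aux_diffAt hU (aux_cd_iter hU k j hf) hx).mul
          (aux_diffAt hU (aux_cd_iter hU k (n-j) hg) hx)))]
    have hterm : ∀ j ∈ Finset.range (n+1),
        (c j : ℂ) * pderiv' k (fun y => (pderiv' k)^[j] f y * (pderiv' k)^[n-j] g y) x
        = (c j : ℂ) * ((pderiv' k)^[j+1] f x * (pderiv' k)^[n-j] g x
            + (pderiv' k)^[j] f x * (pderiv' k)^[(n-j)+1] g x) := by
      intro j _
      rw [pderiv'_mul k (aux_diffAt hU (aux_cd_iter hU k j hf) hx)
        (aux_diffAt hU (aux_cd_iter hU k (n-j) hg) hx),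
        ← Function.iterate_succ_apply' (pderiv' k) j,
        ← Function.iterate_succ_apply' (pderiv' k) (n-j)]
    rw [Finset.sum_congr rfl hterm]
    -- now the combinatorial identity
    set A : ℕ → ℂ := fun j => (pderiv' k)^[j] f x with hA
    set B : ℕ → ℂ := fun j => (pderiv' k)^[j] g x with hB
    show ∑ j ∈ Finset.range (n+1), (c j : ℂ) * (A (j+1) * B (n-j) + A j * B (n-j+1))
      = ∑ j ∈ Finset.range (n+1+1),
          (((if j ≤ n then c j else 0) + (if 1 ≤ j then c (j-1) else 0) : ℕ) : ℂ)
            * (A j * B (n+1-j))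
    have h1 : ∀ j : ℕ, ((((if j ≤ n then c j else 0) + (if 1 ≤ j then c (j-1) else 0) : ℕ)) : ℂ)
        = (if j ≤ n then (c j : ℂ) else 0) + (if 1 ≤ j then (c (j-1) : ℂ) else 0) := by
      intro j; push_cast [apply_ite (Nat.cast : ℕ → ℂ)]; ring
    have e1 : ∑ j ∈ Finset.range (n+2), (if j ≤ n then (c j : ℂ) else 0) * (A j * B (n+1-j))
        = ∑ j ∈ Finset.range (n+1), (c j : ℂ) * (A j * B (n-j+1)) := by
      rw [Finset.sum_range_succ]
      have : ¬ (n+1 ≤ n) := by omega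
      rw [if_neg this, zero_mul, add_zero]
      refine Finset.sum_congr rfl fun j hj => ?_
      have hj' : j ≤ n := by simpa [Nat.lt_succ_iff] using hj
      rw [if_pos hj', show n+1-j = n-j+1 by omega]
    have e2 : ∑ j ∈ Finset.range (n+2), (if 1 ≤ j then (c (j-1) : ℂ) else 0) * (A j * B (n+1-j))
        = ∑ j ∈ Finset.range (n+1), (c j : ℂ) * (A (j+1) * B (n-j)) := by
      rw [Finset.sum_range_succ']
      simp only [Nat.add_sub_cancel, Nat.succ_sub_succ]
      norm_num
    simp only [h1, add_mul, mul_add, Finset.sum_add_distrib, e1, e2]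
    rw [add_comm]




lemma sum_piFinset_split {M : Type} [AddCommMonoid M] (s : Fin m → Finset ℕ) (k : Fin m)
    (f : (Fin m → ℕ) → M) :
    ∑ J ∈ Fintype.piFinset s, f J
      = ∑ j ∈ s k, ∑ J₀ ∈ Fintype.piFinset (Function.update s k {0}),
          f (Function.update J₀ k j) := by
  rw [← Finset.sum_product']
  refine Finset.sum_nbij' (fun J => (J k, Function.update J k 0))
    (fun p => Function.update p.2 k p.1) ?_ ?_ ?_ ?_ ?_
  · intro J hJ
    rw [Fintype.mem_piFinset] at hJ
    refine Finset.mem_product.2 ⟨hJ k, Fintype.mem_piFinset.2 fun a => ?_⟩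
    rcases eq_or_ne a k with rfl | ha
    · simp
    · simp [Function.update_of_ne ha, hJ a]
  · intro p hp
    rw [Finset.mem_product, Fintype.mem_piFinset] at hp
    refine Fintype.mem_piFinset.2 fun a => ?_
    rcases eq_or_ne a k with rfl | ha
    · simpa using hp.1
    · have := hp.2 a
      simpa [Function.update_of_ne ha] using this
  · intro J hJ
    funext a
    rcases eq_or_ne a k with rfl | ha
    · simp
    · simp [Function.update_of_ne ha]
  · intro p hp
    rw [Finset.mem_product, Fintype.mem_piFinset] at hp
    have hpk : p.2 k = 0 := by have := hp.2 k; simpa using this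
    refine Prod.ext ?_ ?_
    · simp
    · funext a
      rcases eq_or_ne a k with rfl | ha
      · simpa using hpk.symm
      · simp [Function.update_of_ne ha]
  · intro J hJ
    congr 1
    funext a
    rcases eq_or_ne a k with rfl | ha
    · simp
    · simp [Function.update_of_ne ha]


lemma reindex (I : Fin m → ℕ) (k : Fin m) (cT : (Fin m → ℕ) → ℕ) (cA : ℕ → ℕ)
    (t : (Fin m → ℕ) → ℂ) :
    ∑ J ∈ Fintype.piFinset (fun i => Finset.range (I i + 1)),
      ∑ j ∈ Finset.range (I k + 1), (cT J : ℂ) * (cA j : ℂ) * t (Function.update J k j)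
    = ∑ K ∈ Fintype.piFinset (fun i => Finset.range (I i + 1)),
        ((cA (K k) * ∑ u ∈ Finset.range (I k + 1), cT (Function.update K k u) : ℕ) : ℂ) * t K := by
  rw [sum_piFinset_split (fun i => Finset.range (I i + 1)) k
    (fun J => ∑ j ∈ Finset.range (I k + 1), (cT J : ℂ) * (cA j : ℂ) * t (Function.update J k j))]
  rw [sum_piFinset_split (fun i => Finset.range (I i + 1)) k
    (fun K => ((cA (K k) * ∑ u ∈ Finset.range (I k + 1), cT (Function.update K k u) : ℕ) : ℂ) * t K)]
  simp only [Function.update_idem, Function.update_self]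
  push_cast
  rw [Finset.sum_comm]
  conv_rhs => rw [Finset.sum_comm]
  refine Finset.sum_congr rfl fun J₀ _ => ?_
  simp only [Finset.mul_sum, Finset.sum_mul]
  rw [Finset.sum_comm]
  refine Finset.sum_congr rfl fun j _ => ?_
  refine Finset.sum_congr rfl fun u _ => ?_
  ring

lemma Dl_cons (k : Fin m) (T : List (Fin m)) (J : Fin m → ℕ) (f : (Fin m → ℝ) → ℂ) :
    Dl (k :: T) J f = (pderiv' k)^[J k] (Dl T J f) := rfl

lemma Dl_congr_index (L : List (Fin m)) {J J' : Fin m → ℕ} (f : (Fin m → ℝ) → ℂ)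
    (h : ∀ i ∈ L, J i = J' i) : Dl L J f = Dl L J' f := by
  induction L with
  | nil => rfl
  | cons k T IH =>
    rw [Dl_cons, Dl_cons, IH (fun i hi => h i (List.mem_cons_of_mem k hi)),
      h k List.mem_cons_self]

lemma Dl_cd (hU : IsOpen U) (L : List (Fin m)) (J : Fin m → ℕ) {f : (Fin m → ℝ) → ℂ}
    (hf : ContDiffOn ℝ (⊤ : ℕ∞) f U) : ContDiffOn ℝ (⊤ : ℕ∞) (Dl L J f) U := by
  induction L with
  | nil => exact hf
  | cons k T IH => rw [Dl_cons]; exact aux_cd_iter hU k (J k) IH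

lemma leibD (hU : IsOpen U) (I : Fin m → ℕ) :
    ∀ L : List (Fin m), L.Nodup →
    ∃ c : (Fin m → ℕ) → ℕ, ∀ f g : (Fin m → ℝ) → ℂ,
      ContDiffOn ℝ (⊤ : ℕ∞) f U → ContDiffOn ℝ (⊤ : ℕ∞) g U → ∀ x ∈ U,
      Dl L I (fun y => f y * g y) x
        = ∑ J ∈ Fintype.piFinset (fun i => Finset.range (I i + 1)),
            (c J : ℂ) * (Dl L J f x * Dl L (fun i => I i - J i) g x) := by
  intro L
  induction L with
  | nil =>
    intro _
    refine ⟨fun J => if J = (fun _ => 0) then 1 else 0, ?_⟩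
    intro f g hf hg x hx
    show f x * g x = ∑ J ∈ Fintype.piFinset (fun i => Finset.range (I i + 1)),
      ((if J = (fun _ => 0) then 1 else 0 : ℕ) : ℂ) * (f x * g x)
    rw [← Finset.sum_mul]
    have : ∑ J ∈ Fintype.piFinset (fun i => Finset.range (I i + 1)),
        ((if J = (fun _ => 0) then 1 else 0 : ℕ) : ℂ) = 1 := by
      simp only [apply_ite (Nat.cast : ℕ → ℂ), Nat.cast_one, Nat.cast_zero,
        Finset.sum_ite_eq' (Fintype.piFinset (fun i => Finset.range (I i + 1)))
          (fun _ => 0 : Fin m → ℕ) (fun _ => (1:ℂ))]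
      simp [Fintype.mem_piFinset]
    rw [this, one_mul]
  | cons k T IH =>
    intro hnd
    have hk : k ∉ T := (List.nodup_cons.1 hnd).1
    obtain ⟨cT, hcT⟩ := IH (List.nodup_cons.1 hnd).2
    obtain ⟨cA, hcA⟩ := leib1 hU k (I k)
    refine ⟨fun K => cA (K k) * ∑ u ∈ Finset.range (I k + 1), cT (Function.update K k u), ?_⟩
    intro f g hf hg x hx
    have key1 : ∀ J : Fin m → ℕ, ∀ j : ℕ,
        (pderiv' k)^[j] (Dl T J f) x = Dl (k :: T) (Function.update J k j) f x := by
      intro J j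
      rw [Dl_cons, Function.update_self]
      exact congrArg (fun F => (pderiv' k)^[j] F x)
        (Dl_congr_index T f (fun i hi =>
          (Function.update_of_ne (show i ≠ k from fun h => hk (h ▸ hi)) j J).symm))
    have key2 : ∀ J : Fin m → ℕ, ∀ j : ℕ,
        (pderiv' k)^[I k - j] (Dl T (fun i => I i - J i) g) x
          = Dl (k :: T) (fun i => I i - Function.update J k j i) g x := by
      intro J j
      have hfun : (fun i => I i - Function.update J k j i)
          = Function.update (fun i => I i - J i) k (I k - j) := by
        funext a
        rcases eq_or_ne a k with rfl | ha
        · simp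
        · simp [Function.update_of_ne ha]
      rw [hfun, Dl_cons, Function.update_self]
      exact congrArg (fun F => (pderiv' k)^[I k - j] F x)
        (Dl_congr_index T g (fun i hi =>
          (Function.update_of_ne (show i ≠ k from fun h => hk (h ▸ hi)) (I k - j)
            (fun i => I i - J i)).symm))
    calc Dl (k :: T) I (fun y => f y * g y) x
        = (pderiv' k)^[I k]
            (fun y => ∑ J ∈ Fintype.piFinset (fun i => Finset.range (I i + 1)),
              (cT J : ℂ) * (Dl T J f y * Dl T (fun i => I i - J i) g y)) x := by
          rw [Dl_cons]
          exact iter_congr hU k (I k) (hcT f g hf hg) x hx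
      _ = ∑ J ∈ Fintype.piFinset (fun i => Finset.range (I i + 1)),
            (cT J : ℂ) * (pderiv' k)^[I k]
              (fun y => Dl T J f y * Dl T (fun i => I i - J i) g y) x :=
          iter_sum_smul hU k (I k) _ _
            (fun J => fun y => Dl T J f y * Dl T (fun i => I i - J i) g y)
            (fun J _ => (Dl_cd hU T J hf).mul (Dl_cd hU T _ hg)) x hx
      _ = ∑ J ∈ Fintype.piFinset (fun i => Finset.range (I i + 1)),
            ∑ j ∈ Finset.range (I k + 1), (cT J : ℂ) * (cA j : ℂ) *
              (Dl (k :: T) (Function.update J k j) f x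
                * Dl (k :: T) (fun i => I i - Function.update J k j i) g x) := by
          refine Finset.sum_congr rfl fun J _ => ?_
          rw [hcA (Dl T J f) (Dl T (fun i => I i - J i) g)
            (Dl_cd hU T J hf) (Dl_cd hU T _ hg) x hx, Finset.mul_sum]
          refine Finset.sum_congr rfl fun j _ => ?_
          rw [key1 J j, key2 J j]
          ring
      _ = ∑ K ∈ Fintype.piFinset (fun i => Finset.range (I i + 1)),
            ((cA (K k) * ∑ u ∈ Finset.range (I k + 1), cT (Function.update K k u) : ℕ) : ℂ) *
              (Dl (k :: T) K f x * Dl (k :: T) (fun i => I i - K i) g x) :=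
          reindex I k cT cA
            (fun K => Dl (k :: T) K f x * Dl (k :: T) (fun i => I i - K i) g x)


end auxleib

/-- if smooth `F, G` on `(ℝ∖{0})^m` have `x`-types `(Z_F : F₁,…,F_m)` and
`(Z_G : G₁,…,G_m)` with constants `CF`, `CG`, then `F·G` has `x`-type
`(Z_F·Z_G : F₁+G₁,…,F_m+G_m)`: for every multi-index `I` there is `C`, depending only on
`I`, `CF` and `CG`, such that the corresponding derivative bound holds. -/
theorem mul_hasXType (m : ℕ) (hm : 1 ≤ m)
    (CF CG : (Fin m → ℕ) → ℝ) (I : Fin m → ℕ) :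
    ∃ C : ℝ,
      ∀ (F G : (Fin m → ℝ) → ℂ)
        (ZF ZG : (Fin m → ℝ) → ℝ) (Fs Gs : Fin m → (Fin m → ℝ) → ℝ)
        (U : Set (Fin m → ℝ)), U = {x | ∀ i, x i ≠ 0} →
        ContDiffOn ℝ (⊤ : ℕ∞) F U → ContDiffOn ℝ (⊤ : ℕ∞) G U →
        (∀ x ∈ U, 0 ≤ ZF x) → (∀ x ∈ U, 0 ≤ ZG x) →
        (∀ i, ∀ x ∈ U, 0 ≤ Fs i x) → (∀ i, ∀ x ∈ U, 0 ≤ Gs i x) →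
        HasXType U F ZF Fs CF → HasXType U G ZG Gs CG →
        ∀ x ∈ U,
          (∏ i, |x i| ^ (I i)) * ‖multiPDeriv I (fun y => F y * G y) x‖ ≤
            C * (ZF x * ZG x) * ∏ i, (Fs i x + Gs i x) ^ (I i) := by
  have hU : IsOpen {x : Fin m → ℝ | ∀ i, x i ≠ 0} := by
    have he : {x : Fin m → ℝ | ∀ i, x i ≠ 0} = ⋂ i, (fun x : Fin m → ℝ => x i) ⁻¹' {(0:ℝ)}ᶜ := by
      ext y; simp [Set.mem_iInter]
    rw [he]
    exact isOpen_iInter_of_finite fun i => isOpen_compl_singleton.preimage (continuous_apply i)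
  obtain ⟨c, hc⟩ := leibD hU I (List.finRange m) (List.nodup_finRange m)
  set P := Fintype.piFinset (fun i => Finset.range (I i + 1)) with hP
  refine ⟨∑ J ∈ P, (c J : ℝ) * |CF J| * |CG (fun i => I i - J i)|, ?_⟩
  intro F G ZF ZG Fs Gs U hUeq hF hG hZF hZG hFs hGs hXF hXG x hx
  subst hUeq
  have hEq := hc F G hF hG x hx
  have hmul : multiPDeriv I (fun y => F y * G y) = Dl (List.finRange m) I (fun y => F y * G y) :=
    rfl
  have hA : (0:ℝ) ≤ ∏ i, |x i| ^ (I i) :=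
    Finset.prod_nonneg fun i _ => pow_nonneg (abs_nonneg _) _
  have hZF' := hZF x hx
  have hZG' := hZG x hx
  calc (∏ i, |x i| ^ (I i)) * ‖multiPDeriv I (fun y => F y * G y) x‖
      ≤ (∏ i, |x i| ^ (I i)) *
          ∑ J ∈ P, (c J : ℝ) * (‖Dl (List.finRange m) J F x‖
            * ‖Dl (List.finRange m) (fun i => I i - J i) G x‖) := by
        refine mul_le_mul_of_nonneg_left ?_ hA
        rw [hmul, hEq]
        refine (norm_sum_le _ _).trans (le_of_eq (Finset.sum_congr rfl fun J _ => ?_))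
        rw [norm_mul, norm_mul, Complex.norm_natCast]
    _ = ∑ J ∈ P, (c J : ℝ) * (((∏ i, |x i| ^ (J i)) * ‖Dl (List.finRange m) J F x‖)
          * ((∏ i, |x i| ^ (I i - J i)) * ‖Dl (List.finRange m) (fun i => I i - J i) G x‖)) := by
        rw [Finset.mul_sum]
        refine Finset.sum_congr rfl fun J hJ => ?_
        have hsplit : (∏ i, |x i| ^ (I i))
            = (∏ i, |x i| ^ (J i)) * ∏ i, |x i| ^ (I i - J i) := by
          rw [← Finset.prod_mul_distrib]
          refine Finset.prod_congr rfl fun i _ => ?_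
          rw [← pow_add]
          congr 1
          have : J i < I i + 1 := by
            simpa using (Fintype.mem_piFinset.1 hJ) i
          omega
        rw [hsplit]; ring
    _ ≤ ∑ J ∈ P, (c J : ℝ) * ((|CF J| * ZF x * ∏ i, Fs i x ^ (J i))
          * (|CG (fun i => I i - J i)| * ZG x * ∏ i, Gs i x ^ (I i - J i))) := by
        refine Finset.sum_le_sum fun J hJ => ?_
        refine mul_le_mul_of_nonneg_left ?_ (Nat.cast_nonneg _)
        have hprodF : (0:ℝ) ≤ ∏ i, Fs i x ^ (J i) :=
          Finset.prod_nonneg fun i _ => pow_nonneg (hFs i x hx) _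
        have hprodG : (0:ℝ) ≤ ∏ i, Gs i x ^ (I i - J i) :=
          Finset.prod_nonneg fun i _ => pow_nonneg (hGs i x hx) _
        have hbF : (∏ i, |x i| ^ (J i)) * ‖Dl (List.finRange m) J F x‖
            ≤ |CF J| * ZF x * ∏ i, Fs i x ^ (J i) := by
          refine (hXF J x hx).trans ?_
          rw [mul_assoc, mul_assoc]
          exact mul_le_mul_of_nonneg_right (le_abs_self _) (mul_nonneg hZF' hprodF)
        have hbG : (∏ i, |x i| ^ (I i - J i)) * ‖Dl (List.finRange m) (fun i => I i - J i) G x‖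
            ≤ |CG (fun i => I i - J i)| * ZG x * ∏ i, Gs i x ^ (I i - J i) := by
          refine (hXG (fun i => I i - J i) x hx).trans ?_
          rw [mul_assoc, mul_assoc]
          exact mul_le_mul_of_nonneg_right (le_abs_self _) (mul_nonneg hZG' hprodG)
        exact mul_le_mul hbF hbG
          (mul_nonneg (Finset.prod_nonneg fun i _ => pow_nonneg (abs_nonneg _) _)
            (norm_nonneg _))
          ((mul_nonneg (Finset.prod_nonneg fun i _ => pow_nonneg (abs_nonneg _) _)
            (norm_nonneg _)).trans hbF)
    _ ≤ ∑ J ∈ P, ((c J : ℝ) * |CF J| * |CG (fun i => I i - J i)|)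
          * ((ZF x * ZG x) * ∏ i, (Fs i x + Gs i x) ^ (I i)) := by
        refine Finset.sum_le_sum fun J hJ => ?_
        have hprod : (∏ i, Fs i x ^ (J i)) * (∏ i, Gs i x ^ (I i - J i))
            ≤ ∏ i, (Fs i x + Gs i x) ^ (I i) := by
          rw [← Finset.prod_mul_distrib]
          refine Finset.prod_le_prod
            (fun i _ => mul_nonneg (pow_nonneg (hFs i x hx) _) (pow_nonneg (hGs i x hx) _))
            (fun i _ => ?_)
          have hi : J i ≤ I i := by
            have : J i < I i + 1 := by simpa using (Fintype.mem_piFinset.1 hJ) i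
            omega
          calc Fs i x ^ (J i) * Gs i x ^ (I i - J i)
              ≤ (Fs i x + Gs i x) ^ (J i) * (Fs i x + Gs i x) ^ (I i - J i) :=
                mul_le_mul
                  (pow_le_pow_left₀ (hFs i x hx) (le_add_of_nonneg_right (hGs i x hx)) _)
                  (pow_le_pow_left₀ (hGs i x hx) (le_add_of_nonneg_left (hFs i x hx)) _)
                  (pow_nonneg (hGs i x hx) _)
                  (pow_nonneg (add_nonneg (hFs i x hx) (hGs i x hx)) _)
            _ = (Fs i x + Gs i x) ^ (I i) := by rw [← pow_add]; congr 1; omega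
        have hnn : (0:ℝ) ≤ (c J : ℝ) * (|CF J| * |CG (fun i => I i - J i)| * (ZF x * ZG x)) :=
          mul_nonneg (Nat.cast_nonneg _)
            (mul_nonneg (mul_nonneg (abs_nonneg _) (abs_nonneg _)) (mul_nonneg hZF' hZG'))
        calc (c J : ℝ) * ((|CF J| * ZF x * ∏ i, Fs i x ^ (J i))
              * (|CG (fun i => I i - J i)| * ZG x * ∏ i, Gs i x ^ (I i - J i)))
            = ((c J : ℝ) * (|CF J| * |CG (fun i => I i - J i)| * (ZF x * ZG x)))
                * ((∏ i, Fs i x ^ (J i)) * (∏ i, Gs i x ^ (I i - J i))) := by ring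
          _ ≤ ((c J : ℝ) * (|CF J| * |CG (fun i => I i - J i)| * (ZF x * ZG x)))
                * ∏ i, (Fs i x + Gs i x) ^ (I i) := mul_le_mul_of_nonneg_left hprod hnn
          _ = ((c J : ℝ) * |CF J| * |CG (fun i => I i - J i)|)
                * ((ZF x * ZG x) * ∏ i, (Fs i x + Gs i x) ^ (I i)) := by ring
    _ = (∑ J ∈ P, (c J : ℝ) * |CF J| * |CG (fun i => I i - J i)|)
          * (ZF x * ZG x) * ∏ i, (Fs i x + Gs i x) ^ (I i) := by
        rw [← Finset.sum_mul, mul_assoc]; ring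
end

section
/- Let F : (ℝ∖{0})^n → ℝ be smooth with y-type (Z_F : F₁,…,F_n) with constants (C_I^F), where Z_F, F₁,…,F_n are nonnegative. Let G = (G₁,…,G_n) : (ℝ∖{0})^m → (ℝ∖{0})^n be smooth, where each component G_k has x-type (Z_{G_k} : G_{k1},…,G_{km}) with constants (C_I^{G_k}) and each G_{kj} is nonnegative. Then the composition F∘G has x-type (Z_F(G(x)) : H₁,…,H_m), where H_j(x) = ∑_{k=1}^n ( (F_k(G(x))·Z_{G_k}(x) + |G_k(x)|) · G_{kj}(x) ) / |G_k(x)|; that is, for every multi-index I = (i₁,…,i_m) there is a constant C, depending only on I and the constants (C_I^F), (C_I^{G_k}), such that |x₁^{i₁}⋯x_m^{i_m} ∂_{x₁}^{i₁}⋯∂_{x_m}^{i_m} F(G(x))| ≤ C · Z_F(G(x)) · H₁(x)^{i₁}⋯H_m(x)^{i_m} for all x ∈ (ℝ∖{0})^m. -/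
open scoped BigOperators

noncomputable def pderivs {p : ℕ} {E : Type} [NormedAddCommGroup E] [NormedSpace ℝ E]
    (w : List (Fin p)) (h : (Fin p → ℝ) → E) : (Fin p → ℝ) → E :=
  w.foldr pderiv' h

variable {p : ℕ} {E : Type} [NormedAddCommGroup E] [NormedSpace ℝ E]

lemma pderivs_cons (a : Fin p) (w : List (Fin p)) (h : (Fin p → ℝ) → E) :
    pderivs (a :: w) h = pderiv' a (pderivs w h) := rfl

lemma pderivs_replicate (k : Fin p) (i : ℕ) (h : (Fin p → ℝ) → E) :
    pderivs (List.replicate i k) h = (pderiv' k)^[i] h := by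
  induction i with
  | zero => rfl
  | succ i ih =>
    rw [List.replicate_succ, pderivs_cons, ih, Function.iterate_succ_apply']

/-- the canonical word of a multi-index -/
def wordOf {p : ℕ} (I : Fin p → ℕ) : List (Fin p) :=
  (List.map (fun k => List.replicate (I k) k) (List.finRange p)).flatten

lemma pderivs_append (w w' : List (Fin p)) (h : (Fin p → ℝ) → E) :
    pderivs (w ++ w') h = pderivs w (pderivs w' h) := by
  simp [pderivs, List.foldr_append]

lemma multiPDeriv_eq_pderivs (I : Fin p → ℕ) (h : (Fin p → ℝ) → E) :
    multiPDeriv I h = pderivs (wordOf I) h := by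
  unfold multiPDeriv wordOf
  induction (List.finRange p) with
  | nil => rfl
  | cons a L ih =>
    simp only [List.foldr_cons, List.map_cons, List.flatten_cons, pderivs_append, ih,
      pderivs_replicate]

lemma count_wordOf (I : Fin p → ℕ) (a : Fin p) : (wordOf I).count a = I a := by
  unfold wordOf
  rw [List.count_flatten, List.map_map]
  have : (List.map (List.count a ∘ fun k => List.replicate (I k) k) (List.finRange p))
      = List.ofFn (fun k => if k = a then I k else 0) := by
    rw [List.ofFn_eq_map]
    refine List.map_congr_left ?_
    intro k _
    simp [List.count_replicate]
  rw [this, List.sum_ofFn]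
  simp

lemma length_wordOf (I : Fin p → ℕ) : (wordOf I).length = ∑ j, I j := by
  unfold wordOf
  rw [List.length_flatten, List.map_map]
  have : (List.map (List.length ∘ fun k => List.replicate (I k) k) (List.finRange p))
      = List.ofFn I := by
    rw [List.ofFn_eq_map]; exact List.map_congr_left (by intro k _; simp)
  rw [this, List.sum_ofFn]

lemma list_prod_map_count (l : List (Fin p)) (u : Fin p → ℝ) :
    (l.map u).prod = ∏ k, u k ^ (l.count k) := by
  induction l with
  | nil => simp
  | cons a l ih =>
    simp only [List.map_cons, List.prod_cons, ih]
    have : ∀ k : Fin p, (a :: l).count k = (if k = a then 1 else 0) + l.count k := by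
      intro k
      rw [List.count_cons]
      by_cases hk : k = a
      · subst hk; simp [Nat.add_comm]
      · simp [hk, Ne.symm hk]
    simp only [this]
    rw [Finset.prod_congr rfl (fun k _ => pow_add (u k) _ _), Finset.prod_mul_distrib]
    congr 1
    simp [Finset.prod_ite_eq']
variable {p : ℕ} {E : Type} [NormedAddCommGroup E] [NormedSpace ℝ E]
variable {U : Set (Fin p → ℝ)}

lemma contDiffOn_pderiv' (hU : IsOpen U) {h : (Fin p → ℝ) → E}
    (hh : ContDiffOn ℝ (⊤ : ℕ∞) h U) (k : Fin p) : ContDiffOn ℝ (⊤ : ℕ∞) (pderiv' k h) U := by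
  have h1 : ContDiffOn ℝ (⊤ : ℕ∞) (fderiv ℝ h) U :=
    hh.fderiv_of_isOpen hU (le_of_eq ENat.coe_top_add_one)
  exact h1.clm_apply contDiffOn_const

lemma contDiffOn_pderivs (hU : IsOpen U) {h : (Fin p → ℝ) → E}
    (hh : ContDiffOn ℝ (⊤ : ℕ∞) h U) (w : List (Fin p)) : ContDiffOn ℝ (⊤ : ℕ∞) (pderivs w h) U := by
  induction w with
  | nil => exact hh
  | cons a w ih => exact contDiffOn_pderiv' hU ih a

lemma pderiv'_congr_on (hU : IsOpen U) {h g : (Fin p → ℝ) → E}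
    (hhg : ∀ y ∈ U, h y = g y) {x : Fin p → ℝ} (hx : x ∈ U) (k : Fin p) :
    pderiv' k h x = pderiv' k g x := by
  unfold pderiv'
  rw [Filter.EventuallyEq.fderiv_eq (Filter.eventuallyEq_of_mem (hU.mem_nhds hx) hhg)]

lemma pderiv'_comm (hU : IsOpen U) {h : (Fin p → ℝ) → E}
    (hh : ContDiffOn ℝ (⊤ : ℕ∞) h U) {x : Fin p → ℝ} (hx : x ∈ U) (a b : Fin p) :
    pderiv' a (pderiv' b h) x = pderiv' b (pderiv' a h) x := by
  have hdiff : DifferentiableAt ℝ (fderiv ℝ h) x :=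
    ((hh.fderiv_of_isOpen (m := ((⊤ : ℕ∞) : WithTop ℕ∞)) hU (le_of_eq ENat.coe_top_add_one)).differentiableOn
      (by simp)).differentiableAt (hU.mem_nhds hx)
  have key : ∀ v u : Fin p → ℝ,
      fderiv ℝ (fun y => fderiv ℝ h y v) x u = fderiv ℝ (fderiv ℝ h) x u v := by
    intro v u
    rw [fderiv_clm_apply hdiff (differentiableAt_const v)]
    simp
  have hsym : IsSymmSndFDerivAt ℝ h x := by
    refine (hh.contDiffAt (hU.mem_nhds hx)).isSymmSndFDerivAt ?_
    exact (by rw [minSmoothness_of_isRCLikeNormedField]; exact (WithTop.coe_le_coe.mpr le_top : ((2 : ℕ∞) : WithTop ℕ∞) ≤ ((⊤ : ℕ∞) : WithTop ℕ∞)))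
  show fderiv ℝ (fun y => fderiv ℝ h y (Pi.single b 1)) x (Pi.single a 1)
      = fderiv ℝ (fun y => fderiv ℝ h y (Pi.single a 1)) x (Pi.single b 1)
  rw [key, key, hsym (Pi.single a 1) (Pi.single b 1)]

lemma pderivs_perm (hU : IsOpen U) {h : (Fin p → ℝ) → E}
    (hh : ContDiffOn ℝ (⊤ : ℕ∞) h U) {w w' : List (Fin p)} (hp : w.Perm w') :
    ∀ x ∈ U, pderivs w h x = pderivs w' h x := by
  induction hp with
  | nil => intro x _; rfl
  | cons a _ ih => exact fun x hx => pderiv'_congr_on hU ih hx a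
  | swap a b l =>
      intro x hx
      exact pderiv'_comm hU (contDiffOn_pderivs hU hh l) hx b a
  | trans _ _ ih1 ih2 => exact fun x hx => (ih1 x hx).trans (ih2 x hx)

lemma pderivs_eq_iFD (hU : IsOpen U) {h : (Fin p → ℝ) → E}
    (hh : ContDiffOn ℝ (⊤ : ℕ∞) h U) (w : List (Fin p)) :
    ∀ x ∈ U, pderivs w h x
      = iteratedFDerivWithin ℝ w.length h U x (fun l => Pi.single (w.get l) (1:ℝ)) := by
  induction w with
  | nil =>
      intro x hx
      exact (iteratedFDerivWithin_zero_apply _).symm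
  | cons a w ih =>
      intro x hx
      have hdiff : DifferentiableAt ℝ (iteratedFDerivWithin ℝ w.length h U) x :=
        (hh.differentiableOn_iteratedFDerivWithin
          (by exact_mod_cast lt_top_iff_ne_top.2 (by simp)) hU.uniqueDiffOn).differentiableAt
          (hU.mem_nhds hx)
      have h1 : pderivs (a :: w) h x = fderiv ℝ (pderivs w h) x (Pi.single a 1) := rfl
      have hev : (pderivs w h) =ᶠ[nhds x]
          (fun y => iteratedFDerivWithin ℝ w.length h U y (fun l => Pi.single (w.get l) 1)) :=
        Filter.eventuallyEq_of_mem (hU.mem_nhds hx) ih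
      rw [h1, hev.fderiv_eq,
        fderiv_continuousMultilinear_apply_const_apply hdiff _ _,
        ← fderivWithin_of_isOpen hU hx]
      exact (iteratedFDerivWithin_succ_apply_left (𝕜 := ℝ) (f := h) (s := U) (x := x)
        (n := w.length) (fun l : Fin (w.length + 1) => Pi.single ((a :: w).get l) (1:ℝ))).symm

lemma pi_single_fin_cast {q i : ℕ} (g : Fin i → Fin q) {l l' : Fin i} (h : l.1 = l'.1) :
    (Pi.single (g l) (1:ℝ) : Fin q → ℝ) = Pi.single (g l') 1 := by
  obtain rfl := Fin.ext h; rfl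

lemma pderivs_ofFn_eq_iFD (hU : IsOpen U) {h : (Fin p → ℝ) → E}
    (hh : ContDiffOn ℝ (⊤ : ℕ∞) h U) {i : ℕ} (f : Fin i → Fin p) :
    ∀ x ∈ U, pderivs (List.ofFn f) h x
      = iteratedFDerivWithin ℝ i h U x (fun l => Pi.single (f l) (1:ℝ)) := by
  intro x hx
  rw [pderivs_eq_iFD hU hh (List.ofFn f) x hx]
  have hgen : ∀ (j : ℕ) (hj : (List.ofFn f).length = j) (v : Fin j → (Fin p → ℝ)),
      (∀ l : Fin j, v l = Pi.single ((List.ofFn f).get (Fin.cast hj.symm l)) 1) →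
      iteratedFDerivWithin ℝ (List.ofFn f).length h U x
          (fun l => Pi.single ((List.ofFn f).get l) (1:ℝ))
        = iteratedFDerivWithin ℝ j h U x v := by
    intro j hj
    subst hj
    intro v hv
    congr 1
    funext l
    rw [hv l]
    exact pi_single_fin_cast (List.ofFn f).get rfl
  exact hgen i List.length_ofFn _ (fun l => by
    rw [List.get_ofFn]
    exact pi_single_fin_cast f rfl)

/-- norm bound for a multilinear map via its values on basis tuples -/
lemma cmlmap_norm_le {i : ℕ}
    (A : ContinuousMultilinearMap ℝ (fun _ : Fin i => (Fin p → ℝ)) E)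
    {B : ℝ} {b : Fin p → ℝ} (hB : 0 ≤ B) (hb : ∀ k, 0 ≤ b k)
    (h : ∀ f : Fin i → Fin p, ‖A (fun l => Pi.single (f l) 1)‖ ≤ B * ∏ l, b (f l)) :
    ‖A‖ ≤ B * (∑ k, b k) ^ i := by
  apply ContinuousMultilinearMap.opNorm_le_bound
  · have : 0 ≤ ∑ k, b k := Finset.sum_nonneg (fun k _ => hb k)
    positivity
  intro v
  have hv : ∀ l : Fin i, v l = ∑ k, v l k • (Pi.single k (1:ℝ) : Fin p → ℝ) := by
    intro l
    funext j
    simp [Pi.single_apply, Finset.sum_apply, mul_ite]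
  calc ‖A v‖ = ‖A (fun l => ∑ k, v l k • (Pi.single k (1:ℝ) : Fin p → ℝ))‖ := by
        congr 1; exact congrArg A (funext hv)
    _ = ‖∑ f : Fin i → Fin p, A (fun l => v l (f l) • (Pi.single (f l) (1:ℝ) : Fin p → ℝ))‖ := by
        rw [A.map_sum]
    _ ≤ ∑ f : Fin i → Fin p, ‖A (fun l => v l (f l) • (Pi.single (f l) (1:ℝ) : Fin p → ℝ))‖ :=
        norm_sum_le _ _
    _ = ∑ f : Fin i → Fin p, (∏ l, |v l (f l)|) * ‖A (fun l => Pi.single (f l) 1)‖ := by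
        refine Finset.sum_congr rfl (fun f _ => ?_)
        rw [A.map_smul_univ, norm_smul]
        congr 1
        rw [Real.norm_eq_abs, Finset.abs_prod]
    _ ≤ ∑ f : Fin i → Fin p, (∏ l, ‖v l‖) * (B * ∏ l, b (f l)) := by
        refine Finset.sum_le_sum (fun f _ => ?_)
        refine mul_le_mul ?_ (h f) (norm_nonneg _) (Finset.prod_nonneg (fun l _ => norm_nonneg _))
        refine Finset.prod_le_prod (fun l _ => abs_nonneg _) (fun l _ => ?_)
        calc |v l (f l)| = ‖v l (f l)‖ := (Real.norm_eq_abs _).symm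
          _ ≤ ‖v l‖ := norm_le_pi_norm (v l) (f l)
    _ = B * (∑ k, b k) ^ i * ∏ l, ‖v l‖ := by
        have h2 : ∑ f : Fin i → Fin p, ∏ l, b (f l) = (∑ k, b k) ^ i := by
          have := Finset.prod_univ_sum (fun _ : Fin i => (Finset.univ : Finset (Fin p)))
            (fun _ k => b k)
          rw [Fintype.piFinset_univ] at this
          rw [← this, Finset.prod_const, Finset.card_univ, Fintype.card_fin]
        have h3 : ∀ f : Fin i → Fin p,
            (∏ l, ‖v l‖) * (B * ∏ l, b (f l)) = (B * ∏ l, ‖v l‖) * ∏ l, b (f l) :=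
          fun f => by ring
        rw [Finset.sum_congr rfl (fun f _ => h3 f), ← Finset.mul_sum, h2]
        ring

lemma pderivs_pi {q : ℕ} {g : Fin q → (Fin p → ℝ) → ℝ} (hU : IsOpen U)
    (hg : ∀ k, ContDiffOn ℝ (⊤ : ℕ∞) (g k) U) (w : List (Fin p)) :
    ∀ x ∈ U, pderivs w (fun s k => g k s) x = fun k => pderivs w (g k) x := by
  induction w with
  | nil => intro x _; rfl
  | cons a w ih =>
      intro x hx
      have h1 : pderivs (a :: w) (fun s k => g k s) x
          = pderiv' a (fun s k => pderivs w (g k) s) x :=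
        pderiv'_congr_on hU ih hx a
      rw [h1]
      show fderiv ℝ (fun s k => pderivs w (g k) s) x (Pi.single a 1) = _
      rw [fderiv_pi (fun k => ((contDiffOn_pderivs hU (hg k) w).differentiableOn
        (by simp)).differentiableAt (hU.mem_nhds hx))]
      rfl

lemma pderivs_const_smul {g : (Fin p → ℝ) → ℝ} (hU : IsOpen U)
    (hg : ContDiffOn ℝ (⊤ : ℕ∞) g U) (c : ℝ) (w : List (Fin p)) :
    ∀ x ∈ U, pderivs w (fun s => c * g s) x = c * pderivs w g x := by
  induction w with
  | nil => intro x _; rfl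
  | cons a w ih =>
      intro x hx
      have h1 : pderivs (a :: w) (fun s => c * g s) x
          = pderiv' a (fun s => c * pderivs w g s) x :=
        pderiv'_congr_on hU ih hx a
      rw [h1]
      show fderiv ℝ (fun s => c • pderivs w g s) x (Pi.single a 1) = _
      rw [fderiv_fun_const_smul (((contDiffOn_pderivs hU hg w).differentiableOn
        (by simp)).differentiableAt (hU.mem_nhds hx)) c]
      rfl

/-- diagonal continuous linear map -/
noncomputable def diagCLM {p : ℕ} (c : Fin p → ℝ) : (Fin p → ℝ) →L[ℝ] (Fin p → ℝ) :=
  ContinuousLinearMap.pi (fun j => c j • ContinuousLinearMap.proj j)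

lemma diagCLM_apply {p : ℕ} (c : Fin p → ℝ) (s : Fin p → ℝ) :
    diagCLM c s = fun j => c j * s j := by
  funext j
  simp [diagCLM]

lemma diagCLM_single {p : ℕ} (c : Fin p → ℝ) (a : Fin p) :
    diagCLM c (Pi.single a 1) = c a • (Pi.single a 1 : Fin p → ℝ) := by
  rw [diagCLM_apply]
  funext j
  by_cases hj : j = a
  · subst hj; simp
  · simp [Pi.single_apply, hj]

lemma pderivs_comp_diag {h : (Fin p → ℝ) → ℝ} (hU : IsOpen U)
    (hh : ContDiffOn ℝ (⊤ : ℕ∞) h U) (c : Fin p → ℝ) (w : List (Fin p)) :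
    ∀ s, diagCLM c s ∈ U →
      pderivs w (fun t => h (diagCLM c t)) s
        = (w.map c).prod * pderivs w h (diagCLM c s) := by
  induction w with
  | nil => intro s _; simp [pderivs]
  | cons a w ih =>
      intro s hs
      have hV : IsOpen ((diagCLM c) ⁻¹' U) := hU.preimage (diagCLM c).continuous
      have h1 : pderivs (a :: w) (fun t => h (diagCLM c t)) s
          = pderiv' a (fun t => (w.map c).prod * pderivs w h (diagCLM c t)) s :=
        pderiv'_congr_on hV (fun y hy => ih y hy) hs a
      rw [h1]
      have hd1 : DifferentiableAt ℝ (pderivs w h) (diagCLM c s) :=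
        ((contDiffOn_pderivs hU hh w).differentiableOn (by simp)).differentiableAt
          (hU.mem_nhds hs)
      have hd2 : DifferentiableAt ℝ (fun t => pderivs w h (diagCLM c t)) s :=
        (hd1.comp s (diagCLM c).differentiableAt : )
      show fderiv ℝ (fun t => (w.map c).prod • pderivs w h (diagCLM c t)) s (Pi.single a 1) = _
      rw [fderiv_fun_const_smul hd2]
      have hcomp : fderiv ℝ (fun t => pderivs w h (diagCLM c t)) s
          = (fderiv ℝ (pderivs w h) (diagCLM c s)).comp (diagCLM c) := by
        have h5 := fderiv_comp s hd1 (diagCLM c).differentiableAt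
        rw [(diagCLM c).fderiv] at h5
        exact h5
      rw [ContinuousLinearMap.smul_apply, hcomp]
      simp only [ContinuousLinearMap.coe_comp', Function.comp_apply, diagCLM_single,
        map_smul]
      show (w.map c).prod • (c a • pderiv' a (pderivs w h) (diagCLM c s)) = _
      rw [List.map_cons, List.prod_cons, pderivs_cons]
      simp [smul_smul]
      ring

lemma pderivs_bound_of_hasXType {h : (Fin p → ℝ) → E} {Z : (Fin p → ℝ) → ℝ}
    {Fs : Fin p → (Fin p → ℝ) → ℝ} {Ch : (Fin p → ℕ) → ℝ}
    (hU : IsOpen U) (hU0 : ∀ x ∈ U, ∀ j, x j ≠ 0)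
    (hh : ContDiffOn ℝ (⊤ : ℕ∞) h U) (ht : HasXType U h Z Fs Ch)
    (hZ : ∀ x ∈ U, 0 ≤ Z x) (hFs : ∀ k, ∀ x ∈ U, 0 ≤ Fs k x)
    (w : List (Fin p)) {x : Fin p → ℝ} (hx : x ∈ U) :
    ‖pderivs w h x‖ ≤ |Ch (fun k => w.count k)| * Z x
      * ∏ k, (Fs k x / |x k|) ^ (w.count k) := by
  set J : Fin p → ℕ := fun k => w.count k with hJ
  have hperm : w.Perm (wordOf J) := by
    rw [List.perm_iff_count]
    intro a
    rw [count_wordOf]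
  have heq : pderivs w h x = multiPDeriv J h x := by
    rw [multiPDeriv_eq_pderivs]
    exact pderivs_perm hU hh hperm x hx
  have hbound := ht J x hx
  have hxpos : ∀ k, (0:ℝ) < |x k| := fun k => abs_pos.mpr (hU0 x hx k)
  have hprodpos : (0:ℝ) < ∏ k, |x k| ^ (J k) :=
    Finset.prod_pos (fun k _ => pow_pos (hxpos k) _)
  have hFsprod : (0:ℝ) ≤ ∏ k, (Fs k x) ^ (J k) :=
    Finset.prod_nonneg (fun k _ => pow_nonneg (hFs k x hx) _)
  have hsplit : ∏ k, (Fs k x / |x k|) ^ (J k)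
      = (∏ k, (Fs k x) ^ (J k)) / ∏ k, |x k| ^ (J k) := by
    rw [← Finset.prod_div_distrib]
    exact Finset.prod_congr rfl (fun k _ => div_pow _ _ _)
  rw [heq, hsplit, ← mul_div_assoc, le_div_iff₀ hprodpos]
  calc ‖multiPDeriv J h x‖ * ∏ k, |x k| ^ (J k)
      = (∏ k, |x k| ^ (J k)) * ‖multiPDeriv J h x‖ := by ring
    _ ≤ Ch J * Z x * ∏ k, (Fs k x) ^ (J k) := hbound
    _ ≤ |Ch J| * Z x * ∏ k, (Fs k x) ^ (J k) := by
        refine mul_le_mul_of_nonneg_right ?_ hFsprod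
        exact mul_le_mul_of_nonneg_right (le_abs_self _) (hZ x hx)


set_option maxHeartbeats 1000000 in
/-- chain rule for types. If `F : (ℝ∖{0})^n → ℝ` has `y`-type
`(Z_F : F₁,…,F_n)` with constants `CF` and the components `G_k : (ℝ∖{0})^m → ℝ∖{0}` of
`G` have `x`-types `(Z_{G_k} : G_{k1},…,G_{km})` with constants `CG k`, then `F ∘ G` has
`x`-type `(Z_F ∘ G : H₁,…,H_m)` with
`H_j(x) = ∑_k (F_k(G(x))·Z_{G_k}(x) + |G_k(x)|)·G_{kj}(x)/|G_k(x)|`: for every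
multi-index `I` there is `C`, depending only on `I`, `CF` and the `CG k`, such that the
corresponding derivative bound holds. -/
theorem comp_hasXType (m n : ℕ) (hm : 1 ≤ m) (hn : 1 ≤ n)
    (CF : (Fin n → ℕ) → ℝ) (CG : Fin n → (Fin m → ℕ) → ℝ) (I : Fin m → ℕ) :
    ∃ C : ℝ,
      ∀ (F : (Fin n → ℝ) → ℝ) (G : Fin n → (Fin m → ℝ) → ℝ)
        (ZF : (Fin n → ℝ) → ℝ) (Fs : Fin n → (Fin n → ℝ) → ℝ)
        (ZG : Fin n → (Fin m → ℝ) → ℝ) (Gs : Fin n → Fin m → (Fin m → ℝ) → ℝ)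
        (Um : Set (Fin m → ℝ)) (Un : Set (Fin n → ℝ)),
        Um = {x | ∀ j, x j ≠ 0} → Un = {y | ∀ k, y k ≠ 0} →
        ContDiffOn ℝ (⊤ : ℕ∞) F Un →
        (∀ k, ContDiffOn ℝ (⊤ : ℕ∞) (G k) Um) →
        (∀ x ∈ Um, ∀ k, G k x ≠ 0) →
        (∀ y ∈ Un, 0 ≤ ZF y) → (∀ k, ∀ y ∈ Un, 0 ≤ Fs k y) →
        (∀ k, ∀ x ∈ Um, 0 ≤ ZG k x) → (∀ k j, ∀ x ∈ Um, 0 ≤ Gs k j x) →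
        HasXType Un F ZF Fs CF →
        (∀ k, HasXType Um (G k) (ZG k) (Gs k) (CG k)) →
        ∀ x ∈ Um,
          (∏ j, |x j| ^ (I j)) * ‖multiPDeriv I (fun x' => F (fun k => G k x')) x‖ ≤
            C * ZF (fun k => G k x) *
              ∏ j, (∑ k, (Fs k (fun k' => G k' x) * ZG k x + |G k x|) * Gs k j x / |G k x|)
                ^ (I j) := by
  classical
  set N : ℕ := ∑ j, I j with hN
  set AF : ℝ := ∑ J' : Fin n → Fin (N+1), |CF (fun k => (J' k : ℕ))| with hAF
  set AG : ℝ := ∑ k : Fin n, ∑ J' : Fin m → Fin (N+1), |CG k (fun j => (J' j : ℕ))| with hAG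
  have hAFnn : 0 ≤ AF := Finset.sum_nonneg fun _ _ => abs_nonneg _
  have hAGnn : 0 ≤ AG :=
    Finset.sum_nonneg fun _ _ => Finset.sum_nonneg fun _ _ => abs_nonneg _
  have hAFle : ∀ J : Fin n → ℕ, (∀ k, J k ≤ N) → |CF J| ≤ AF := by
    intro J hJ
    exact Finset.single_le_sum (f := fun J' : Fin n → Fin (N+1) => |CF (fun k => (J' k : ℕ))|)
      (fun _ _ => abs_nonneg _)
      (Finset.mem_univ (fun k => (⟨J k, Nat.lt_succ_of_le (hJ k)⟩ : Fin (N+1))))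
  have hAGle : ∀ (k : Fin n) (J : Fin m → ℕ), (∀ j, J j ≤ N) → |CG k J| ≤ AG := by
    intro k J hJ
    have h1 : |CG k J| ≤ ∑ J' : Fin m → Fin (N+1), |CG k (fun j => (J' j : ℕ))| :=
      Finset.single_le_sum (f := fun J' : Fin m → Fin (N+1) => |CG k (fun j => (J' j : ℕ))|)
        (fun _ _ => abs_nonneg _)
        (Finset.mem_univ (fun j => (⟨J j, Nat.lt_succ_of_le (hJ j)⟩ : Fin (N+1))))
    refine h1.trans ?_
    exact Finset.single_le_sum
      (f := fun k => ∑ J' : Fin m → Fin (N+1), |CG k (fun j => (J' j : ℕ))|)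
      (fun _ _ => Finset.sum_nonneg fun _ _ => abs_nonneg _) (Finset.mem_univ k)
  refine ⟨(N.factorial : ℝ) * AF * (n:ℝ)^N * ((m:ℝ) * (2*AG+1))^N, ?_⟩
  intro F G ZF Fs ZG Gs Um Un hUm hUn hF hG hGne hZF hFs hZG hGs htF htG x hx
  subst hUm hUn
  have hUmo : IsOpen {x : Fin m → ℝ | ∀ j, x j ≠ 0} := by
    have : {x : Fin m → ℝ | ∀ j, x j ≠ 0} = ⋂ j, {x : Fin m → ℝ | x j ≠ 0} := by
      ext z; simp [Set.mem_iInter]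
    rw [this]
    exact isOpen_iInter_of_finite fun j => isOpen_compl_singleton.preimage (continuous_apply j)
  have hUno : IsOpen {y : Fin n → ℝ | ∀ k, y k ≠ 0} := by
    have : {y : Fin n → ℝ | ∀ k, y k ≠ 0} = ⋂ k, {y : Fin n → ℝ | y k ≠ 0} := by
      ext z; simp [Set.mem_iInter]
    rw [this]
    exact isOpen_iInter_of_finite fun k => isOpen_compl_singleton.preimage (continuous_apply k)
  set Um : Set (Fin m → ℝ) := {x | ∀ j, x j ≠ 0} with hUmdef
  set Un : Set (Fin n → ℝ) := {y | ∀ k, y k ≠ 0} with hUndef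
  set y : Fin n → ℝ := fun k => G k x with hy
  have hyUn : y ∈ Un := fun k => hGne x hx k
  have hGpi : ContDiffOn ℝ (⊤ : ℕ∞) (fun x' (k : Fin n) => G k x') Um := contDiffOn_pi.mpr hG
  have hmapsG : Set.MapsTo (fun x' (k : Fin n) => G k x') Um Un := fun z hz k => hGne z hz k
  have hFG : ContDiffOn ℝ (⊤ : ℕ∞) (fun x' => F (fun k => G k x')) Um := hF.comp hGpi hmapsG
  set H : Fin m → ℝ := fun j => ∑ k, (Fs k y * ZG k x + |G k x|) * Gs k j x / |G k x| with hH
  have hterm_nn : ∀ k j, 0 ≤ (Fs k y * ZG k x + |G k x|) * Gs k j x / |G k x| := by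
    intro k j
    have h0 : 0 ≤ Fs k y * ZG k x := mul_nonneg (hFs k y hyUn) (hZG k x hx)
    exact div_nonneg (mul_nonneg (add_nonneg h0 (abs_nonneg _)) (hGs k j x hx)) (abs_nonneg _)
  have hHnn : ∀ j, 0 ≤ H j := fun j => Finset.sum_nonneg fun k _ => hterm_nn k j
  have hGabs : ∀ k, (0:ℝ) < |G k x| := fun k => abs_pos.mpr (hGne x hx k)
  have hGsleH : ∀ k j, Gs k j x ≤ H j := by
    intro k j
    have h1 : Gs k j x ≤ (Fs k y * ZG k x + |G k x|) * Gs k j x / |G k x| := by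
      rw [le_div_iff₀ (hGabs k)]
      have : 0 ≤ Fs k y * ZG k x := mul_nonneg (hFs k y hyUn) (hZG k x hx)
      nlinarith [hGs k j x hx]
    exact h1.trans (Finset.single_le_sum (fun k' _ => hterm_nn k' j) (Finset.mem_univ k))
  have hFZGleH : ∀ k j, Fs k y * ZG k x * Gs k j x / |G k x| ≤ H j := by
    intro k j
    have h1 : Fs k y * ZG k x * Gs k j x / |G k x|
        ≤ (Fs k y * ZG k x + |G k x|) * Gs k j x / |G k x| := by
      gcongr
      · exact hGs k j x hx
      · exact le_add_of_nonneg_right (abs_nonneg _)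
    exact h1.trans (Finset.single_le_sum (fun k' _ => hterm_nn k' j) (Finset.mem_univ k))
  have key : ∀ ε : ℝ, 0 < ε →
      (∏ j, |x j| ^ (I j)) * ‖multiPDeriv I (fun x' => F (fun k => G k x')) x‖ ≤
        (N.factorial : ℝ) * AF * (n:ℝ)^N * ((m:ℝ) * (2*AG+1))^N * ZF y *
          ∏ j, (H j + ε) ^ (I j) := by
    intro ε hε
    set W : Fin m → ℝ := fun j => H j + ε with hW
    have hWpos : ∀ j, 0 < W j := fun j => add_pos_of_nonneg_of_pos (hHnn j) hε
    have hWne : ∀ j, W j ≠ 0 := fun j => ne_of_gt (hWpos j)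
    set K : ℝ := (∑ k, ∑ j, ZG k x * Gs k j x / (|G k x| * W j)) + 1 with hK
    have hterm2_nn : ∀ k j, 0 ≤ ZG k x * Gs k j x / (|G k x| * W j) := fun k j =>
      div_nonneg (mul_nonneg (hZG k x hx) (hGs k j x hx))
        (mul_nonneg (abs_nonneg _) (le_of_lt (hWpos j)))
    have hKpos : 0 < K :=
      add_pos_of_nonneg_of_pos
        (Finset.sum_nonneg fun k _ => Finset.sum_nonneg fun j _ => hterm2_nn k j) one_pos
    set δ : ℝ := K⁻¹ with hδdef
    have hδpos : 0 < δ := inv_pos.mpr hKpos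
    have hδbound : ∀ k j, δ * (ZG k x * Gs k j x / (|G k x| * W j)) ≤ 1 := by
      intro k j
      have h1 : ZG k x * Gs k j x / (|G k x| * W j) ≤ K := by
        refine le_trans ?_ (le_add_of_nonneg_right zero_le_one)
        refine le_trans (Finset.single_le_sum (fun j' _ => hterm2_nn k j')
          (Finset.mem_univ j)) ?_
        exact Finset.single_le_sum
          (f := fun k' => ∑ j', ZG k' x * Gs k' j' x / (|G k' x| * W j'))
          (fun k' _ => Finset.sum_nonneg fun j' _ => hterm2_nn k' j') (Finset.mem_univ k)
      calc δ * (ZG k x * Gs k j x / (|G k x| * W j)) ≤ δ * K :=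
            mul_le_mul_of_nonneg_left h1 (le_of_lt hδpos)
        _ = 1 := inv_mul_cancel₀ (ne_of_gt hKpos)
    set u : Fin n → ℝ := fun k => |G k x| / (Fs k y + δ) with hu
    have hFsδpos : ∀ k, 0 < Fs k y + δ := fun k =>
      add_pos_of_nonneg_of_pos (hFs k y hyUn) hδpos
    have hupos : ∀ k, 0 < u k := fun k => div_pos (hGabs k) (hFsδpos k)
    set xw : Fin m → ℝ := fun j => x j / W j with hxw
    set Fhat : (Fin n → ℝ) → ℝ := fun z => F (diagCLM u z) with hFhat
    set g : Fin n → (Fin m → ℝ) → ℝ := fun k s => (u k)⁻¹ * G k (diagCLM xw s) with hg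
    set Ghat : (Fin m → ℝ) → (Fin n → ℝ) := fun s k => g k s with hGhat
    set yhat : Fin n → ℝ := fun k => (u k)⁻¹ * y k with hyhat
    set S' : Set (Fin m → ℝ) := (diagCLM xw) ⁻¹' Um with hS'
    set T' : Set (Fin n → ℝ) := (diagCLM u) ⁻¹' Un with hT'
    have hS'o : IsOpen S' := hUmo.preimage (diagCLM xw).continuous
    have hT'o : IsOpen T' := hUno.preimage (diagCLM u).continuous
    have hΨW : diagCLM xw W = x := by
      rw [diagCLM_apply]
      funext j
      exact div_mul_cancel₀ (x j) (hWne j)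
    have hWS' : W ∈ S' := by
      show diagCLM xw W ∈ Um
      rw [hΨW]; exact hx
    have hGhatW : Ghat W = yhat := by
      funext k
      show (u k)⁻¹ * G k (diagCLM xw W) = (u k)⁻¹ * y k
      rw [hΨW]
    have hucancel : ∀ s, diagCLM u (Ghat s) = fun k => G k (diagCLM xw s) := by
      intro s
      rw [diagCLM_apply]
      funext k
      exact mul_inv_cancel_left₀ (ne_of_gt (hupos k)) _
    have huyhat : diagCLM u yhat = y := by
      rw [diagCLM_apply]
      funext k
      exact mul_inv_cancel_left₀ (ne_of_gt (hupos k)) _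
    have hyhatT : yhat ∈ T' := by
      show diagCLM u yhat ∈ Un
      rw [huyhat]; exact hyUn
    have hFhatSm : ContDiffOn ℝ (⊤ : ℕ∞) Fhat T' :=
      hF.comp ((diagCLM u).contDiff.contDiffOn) (fun z hz => hz)
    have hgSm : ∀ k, ContDiffOn ℝ (⊤ : ℕ∞) (g k) S' := fun k =>
      ((hG k).const_smul ((u k)⁻¹)).comp ((diagCLM xw).contDiff.contDiffOn) (fun s hs => hs)
    have hGhatSm : ContDiffOn ℝ (⊤ : ℕ∞) Ghat S' := contDiffOn_pi.mpr hgSm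
    have hmapsGhat : Set.MapsTo Ghat S' T' := by
      intro s hs
      show diagCLM u (Ghat s) ∈ Un
      rw [hucancel s]
      exact fun k => hGne _ hs k
    -- bound for iterated derivatives of Fhat at yhat
    set b : Fin n → ℝ := fun k => Fs k y / (Fs k y + δ) with hb
    have hbnn : ∀ k, 0 ≤ b k := fun k => div_nonneg (hFs k y hyUn) (le_of_lt (hFsδpos k))
    have hble : ∀ k, b k ≤ 1 := fun k =>
      (div_le_one (hFsδpos k)).mpr (le_add_of_nonneg_right (le_of_lt hδpos))
    have hZFy : 0 ≤ ZF y := hZF y hyUn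
    have hC : ∀ i, i ≤ N →
        ‖iteratedFDerivWithin ℝ i Fhat T' yhat‖ ≤ AF * ZF y * (n:ℝ)^N := by
      intro i hi
      have hkey : ∀ f : Fin i → Fin n,
          ‖iteratedFDerivWithin ℝ i Fhat T' yhat (fun l => Pi.single (f l) 1)‖
            ≤ (AF * ZF y) * ∏ l, b (f l) := by
        intro f
        have he1 : iteratedFDerivWithin ℝ i Fhat T' yhat (fun l => Pi.single (f l) 1)
            = pderivs (List.ofFn f) Fhat yhat :=
          (pderivs_ofFn_eq_iFD hT'o hFhatSm f yhat hyhatT).symm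
        have he2 : pderivs (List.ofFn f) Fhat yhat
            = ((List.ofFn f).map u).prod * pderivs (List.ofFn f) F (diagCLM u yhat) :=
          pderivs_comp_diag hUno hF u (List.ofFn f) yhat (by rw [huyhat]; exact hyUn)
        set J : Fin n → ℕ := fun k => (List.ofFn f).count k with hJ
        have hJle : ∀ k, J k ≤ N := by
          intro k
          have h1 : (List.ofFn f).count k ≤ (List.ofFn f).length := List.count_le_length
          rw [List.length_ofFn] at h1
          exact h1.trans hi
        have he3 : ‖pderivs (List.ofFn f) F y‖
            ≤ |CF J| * ZF y * ∏ k, (Fs k y / |y k|) ^ (J k) :=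
          pderivs_bound_of_hasXType hUno (fun z hz k => hz k) hF htF hZF hFs
            (List.ofFn f) hyUn
        have hprodu : |((List.ofFn f).map u).prod| = ∏ k, (u k) ^ (J k) := by
          rw [list_prod_map_count]
          exact abs_of_pos (Finset.prod_pos fun k _ => pow_pos (hupos k) _)
        have hbJ : ∏ l, b (f l) = ∏ k, (b k) ^ (J k) := by
          rw [← list_prod_map_count (List.ofFn f) b, List.map_ofFn, List.prod_ofFn]
          rfl
        rw [he1, he2, huyhat, norm_mul]
        have hcomb : (∏ k, (u k) ^ (J k)) * (|CF J| * ZF y * ∏ k, (Fs k y / |y k|) ^ (J k))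
            ≤ (AF * ZF y) * ∏ l, b (f l) := by
          rw [hbJ]
          have hcomb2 : (∏ k, (u k) ^ (J k)) * ∏ k, (Fs k y / |y k|) ^ (J k)
              = ∏ k, (b k) ^ (J k) := by
            rw [← Finset.prod_mul_distrib]
            refine Finset.prod_congr rfl (fun k _ => ?_)
            rw [← mul_pow]
            congr 1
            show u k * (Fs k y / |G k x|) = b k
            have hGne' : |G k x| ≠ 0 := ne_of_gt (hGabs k)
            calc u k * (Fs k y / |G k x|)
                = (|G k x| * Fs k y) / ((Fs k y + δ) * |G k x|) := div_mul_div_comm _ _ _ _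
              _ = (|G k x| * Fs k y) / (|G k x| * (Fs k y + δ)) := by
                  rw [mul_comm (Fs k y + δ)]
              _ = Fs k y / (Fs k y + δ) := mul_div_mul_left _ _ hGne'
          calc (∏ k, (u k) ^ (J k)) * (|CF J| * ZF y * ∏ k, (Fs k y / |y k|) ^ (J k))
              = ((∏ k, (u k) ^ (J k)) * ∏ k, (Fs k y / |y k|) ^ (J k)) * (|CF J| * ZF y) := by
                ring
            _ = (∏ k, (b k) ^ (J k)) * (|CF J| * ZF y) := by rw [hcomb2]
            _ ≤ (∏ k, (b k) ^ (J k)) * (AF * ZF y) := by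
                refine mul_le_mul_of_nonneg_left ?_
                  (Finset.prod_nonneg fun k _ => pow_nonneg (hbnn k) _)
                exact mul_le_mul_of_nonneg_right (hAFle J hJle) hZFy
            _ = (AF * ZF y) * ∏ k, (b k) ^ (J k) := by ring
        refine le_trans ?_ hcomb
        rw [Real.norm_eq_abs, hprodu]
        exact mul_le_mul_of_nonneg_left he3
          (Finset.prod_nonneg fun k _ => pow_nonneg (le_of_lt (hupos k)) _)
      have h4 := cmlmap_norm_le (iteratedFDerivWithin ℝ i Fhat T' yhat)
        (mul_nonneg hAFnn hZFy) hbnn hkey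
      refine h4.trans ?_
      have hsumb : ∑ k, b k ≤ (n:ℝ) := by
        calc ∑ k, b k ≤ ∑ _k : Fin n, (1:ℝ) := Finset.sum_le_sum fun k _ => hble k
          _ = (n:ℝ) := by simp
      have h5 : (∑ k, b k) ^ i ≤ (n:ℝ) ^ N := by
        calc (∑ k, b k) ^ i ≤ (n:ℝ) ^ i :=
              pow_le_pow_left₀ (Finset.sum_nonneg fun k _ => hbnn k) hsumb i
          _ ≤ (n:ℝ) ^ N := pow_le_pow_right₀ (by exact_mod_cast hn) hi
      calc AF * ZF y * (∑ k, b k) ^ i ≤ AF * ZF y * ((n:ℝ)^N) :=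
            mul_le_mul_of_nonneg_left h5 (mul_nonneg hAFnn hZFy)
        _ = AF * ZF y * (n:ℝ)^N := rfl
    -- bound for iterated derivatives of Ghat at W
    have hD : ∀ i, 1 ≤ i → i ≤ N →
        ‖iteratedFDerivWithin ℝ i Ghat S' W‖ ≤ ((m:ℝ) * (2*AG+1)) ^ i := by
      intro i h1i hiN
      have hkey : ∀ f : Fin i → Fin m,
          ‖iteratedFDerivWithin ℝ i Ghat S' W (fun l => Pi.single (f l) 1)‖
            ≤ (2*AG) * ∏ l, (fun _ : Fin m => (1:ℝ)) (f l) := by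
        intro f
        have he1 : iteratedFDerivWithin ℝ i Ghat S' W (fun l => Pi.single (f l) 1)
            = pderivs (List.ofFn f) Ghat W :=
          (pderivs_ofFn_eq_iFD hS'o hGhatSm f W hWS').symm
        have he2 : pderivs (List.ofFn f) Ghat W = fun k => pderivs (List.ofFn f) (g k) W :=
          pderivs_pi hS'o hgSm (List.ofFn f) W hWS'
        set J : Fin m → ℕ := fun j => (List.ofFn f).count j with hJ
        have hJle : ∀ j, J j ≤ N := by
          intro j
          have h1 : (List.ofFn f).count j ≤ (List.ofFn f).length := List.count_le_length
          rw [List.length_ofFn] at h1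
          exact h1.trans hiN
        have hcomp : ∀ k : Fin n, ‖pderivs (List.ofFn f) (g k) W‖ ≤ 2 * AG := by
          intro k
          have hhk : ContDiffOn ℝ (⊤ : ℕ∞) (fun ξ => (u k)⁻¹ * G k ξ) Um := by
            simpa [smul_eq_mul] using (hG k).const_smul ((u k)⁻¹)
          have he3 : pderivs (List.ofFn f) (g k) W
              = ((List.ofFn f).map xw).prod
                * pderivs (List.ofFn f) (fun ξ => (u k)⁻¹ * G k ξ) (diagCLM xw W) :=
            pderivs_comp_diag hUmo hhk xw (List.ofFn f) W (by rw [hΨW]; exact hx)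
          have he4 : pderivs (List.ofFn f) (fun ξ => (u k)⁻¹ * G k ξ) x
              = (u k)⁻¹ * pderivs (List.ofFn f) (G k) x :=
            pderivs_const_smul hUmo (hG k) _ (List.ofFn f) x hx
          have he5 : ‖pderivs (List.ofFn f) (G k) x‖
              ≤ |CG k J| * ZG k x * ∏ j, (Gs k j x / |x j|) ^ (J j) :=
            pderivs_bound_of_hasXType hUmo (fun z hz j => hz j) (hG k) (htG k) (hZG k)
              (fun j z hz => hGs k j z hz) (List.ofFn f) hx
          have habs : |((List.ofFn f).map xw).prod| = ∏ j, (|x j| / W j) ^ (J j) := by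
            rw [list_prod_map_count, Finset.abs_prod]
            refine Finset.prod_congr rfl (fun j _ => ?_)
            rw [abs_pow]
            congr 1
            rw [abs_div, abs_of_pos (hWpos j)]
          have hxne : ∀ j, |x j| ≠ 0 := fun j => ne_of_gt (abs_pos.mpr (hx j))
          have hcombp : (∏ j, (|x j| / W j) ^ (J j)) * ∏ j, (Gs k j x / |x j|) ^ (J j)
              = ∏ j, (Gs k j x / W j) ^ (J j) := by
            rw [← Finset.prod_mul_distrib]
            refine Finset.prod_congr rfl (fun j _ => ?_)
            rw [← mul_pow]
            congr 1
            rw [div_mul_div_comm, mul_comm (|x j|) (Gs k j x), mul_div_mul_right _ _ (hxne j)]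
          have hqnn : ∀ j, 0 ≤ Gs k j x / W j := fun j =>
            div_nonneg (hGs k j x hx) (le_of_lt (hWpos j))
          have hqle1 : ∀ j, Gs k j x / W j ≤ 1 := fun j =>
            (div_le_one (hWpos j)).mpr ((hGsleH k j).trans (le_add_of_nonneg_right hε.le))
          -- core estimate
          set j0 : Fin m := f ⟨0, lt_of_lt_of_le zero_lt_one h1i⟩ with hj0
          have hj0mem : j0 ∈ List.ofFn f := by
            rw [List.mem_ofFn]
            exact ⟨⟨0, lt_of_lt_of_le zero_lt_one h1i⟩, rfl⟩
          have hj0pos : 0 < J j0 := List.count_pos_iff.mpr hj0mem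
          have hprodq : ∏ j, (Gs k j x / W j) ^ (J j) ≤ Gs k j0 x / W j0 := by
            have hsplit := (Finset.mul_prod_erase Finset.univ
              (fun j => (Gs k j x / W j) ^ (J j)) (Finset.mem_univ j0)).symm
            rw [hsplit]
            calc (Gs k j0 x / W j0) ^ (J j0)
                  * ∏ j ∈ Finset.univ.erase j0, (Gs k j x / W j) ^ (J j)
                ≤ (Gs k j0 x / W j0) * 1 := by
                  refine mul_le_mul ?_ ?_ ?_ (hqnn j0)
                  · exact pow_le_of_le_one (hqnn j0) (hqle1 j0) (Nat.pos_iff_ne_zero.mp hj0pos)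
                  · exact Finset.prod_le_one (fun j _ => pow_nonneg (hqnn j) _)
                      (fun j _ => pow_le_one₀ (hqnn j) (hqle1 j))
                  · exact Finset.prod_nonneg (fun j _ => pow_nonneg (hqnn j) _)
              _ = Gs k j0 x / W j0 := mul_one _
          have huinv : (u k)⁻¹ = (Fs k y + δ) / |G k x| := by
            rw [hu]; exact inv_div _ _
          have hGne' : |G k x| ≠ 0 := ne_of_gt (hGabs k)
          have hWj0ne : W j0 ≠ 0 := hWne j0
          have hcore : (u k)⁻¹ * (ZG k x * ∏ j, (Gs k j x / W j) ^ (J j)) ≤ 2 := by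
            have hZGnn := hZG k x hx
            have hle1 : (u k)⁻¹ * (ZG k x * ∏ j, (Gs k j x / W j) ^ (J j))
                ≤ (u k)⁻¹ * (ZG k x * (Gs k j0 x / W j0)) := by
              refine mul_le_mul_of_nonneg_left ?_ (le_of_lt (inv_pos.mpr (hupos k)))
              exact mul_le_mul_of_nonneg_left hprodq hZGnn
            refine hle1.trans ?_
            rw [huinv]
            have hexpand : (Fs k y + δ) / |G k x| * (ZG k x * (Gs k j0 x / W j0))
                = Fs k y * ZG k x * Gs k j0 x / |G k x| / W j0
                  + δ * (ZG k x * Gs k j0 x / (|G k x| * W j0)) := by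
              field_simp
            rw [hexpand]
            have hpart1 : Fs k y * ZG k x * Gs k j0 x / |G k x| / W j0 ≤ 1 := by
              rw [div_le_one (hWpos j0)]
              exact (hFZGleH k j0).trans (le_add_of_nonneg_right hε.le)
            have hpart2 : δ * (ZG k x * Gs k j0 x / (|G k x| * W j0)) ≤ 1 := hδbound k j0
            linarith
          -- assemble the component bound
          have huinvnn : (0:ℝ) ≤ (u k)⁻¹ := (inv_pos.mpr (hupos k)).le
          have hWprod_nn : (0:ℝ) ≤ ∏ j, (|x j| / W j) ^ (J j) :=
            Finset.prod_nonneg fun j _ =>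
              pow_nonneg (div_nonneg (abs_nonneg _) (hWpos j).le) _
          rw [Real.norm_eq_abs] at he5
          have hfin : ‖pderivs (List.ofFn f) (g k) W‖
              ≤ |CG k J| * ((u k)⁻¹ * (ZG k x * ∏ j, (Gs k j x / W j) ^ (J j))) := by
            rw [he3, hΨW, he4]
            rw [norm_mul, norm_mul]
            simp only [Real.norm_eq_abs]
            rw [habs, abs_of_nonneg huinvnn]
            calc (∏ j, (|x j| / W j) ^ (J j)) * ((u k)⁻¹ * |pderivs (List.ofFn f) (G k) x|)
                ≤ (∏ j, (|x j| / W j) ^ (J j))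
                  * ((u k)⁻¹ * (|CG k J| * ZG k x * ∏ j, (Gs k j x / |x j|) ^ (J j))) := by
                  exact mul_le_mul_of_nonneg_left
                    (mul_le_mul_of_nonneg_left he5 huinvnn) hWprod_nn
              _ = |CG k J| * ((u k)⁻¹ * (ZG k x * ((∏ j, (|x j| / W j) ^ (J j))
                    * ∏ j, (Gs k j x / |x j|) ^ (J j)))) := by ring
              _ = |CG k J| * ((u k)⁻¹ * (ZG k x * ∏ j, (Gs k j x / W j) ^ (J j))) := by
                  rw [hcombp]
          refine hfin.trans ?_
          have hcorenn : (0:ℝ) ≤ (u k)⁻¹ * (ZG k x * ∏ j, (Gs k j x / W j) ^ (J j)) :=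
            mul_nonneg huinvnn (mul_nonneg (hZG k x hx)
              (Finset.prod_nonneg fun j _ => pow_nonneg (hqnn j) _))
          calc |CG k J| * ((u k)⁻¹ * (ZG k x * ∏ j, (Gs k j x / W j) ^ (J j)))
              ≤ AG * 2 := mul_le_mul (hAGle k J hJle) hcore hcorenn hAGnn
            _ = 2 * AG := by ring
        -- combine the components into the operator bound
        rw [he1, he2]
        have h2AGnn : (0:ℝ) ≤ 2 * AG := by linarith
        have hpi : ‖(fun k => pderivs (List.ofFn f) (g k) W : Fin n → ℝ)‖ ≤ 2 * AG :=
          (pi_norm_le_iff_of_nonneg h2AGnn).mpr (fun k => hcomp k)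
        calc ‖(fun k => pderivs (List.ofFn f) (g k) W : Fin n → ℝ)‖ ≤ 2 * AG := hpi
          _ = (2 * AG) * ∏ l : Fin i, (fun _ : Fin m => (1:ℝ)) (f l) := by simp
      have h4 := cmlmap_norm_le (iteratedFDerivWithin ℝ i Ghat S' W)
        (by linarith : (0:ℝ) ≤ 2 * AG) (fun _ => zero_le_one) hkey
      refine h4.trans ?_
      have hsum1 : (∑ _j : Fin m, (1:ℝ)) = (m:ℝ) := by simp
      rw [hsum1]
      have h2AG : (2:ℝ) * AG ≤ (2 * AG + 1) ^ i := by
        refine le_trans (by linarith) (le_self_pow₀ (by linarith) ?_)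
        omega
      calc 2 * AG * (m:ℝ) ^ i ≤ (2 * AG + 1) ^ i * (m:ℝ) ^ i := by
            refine mul_le_mul_of_nonneg_right h2AG (pow_nonneg ?_ _)
            exact_mod_cast Nat.zero_le m
        _ = ((m:ℝ) * (2 * AG + 1)) ^ i := by rw [← mul_pow]; ring_nf
    -- final assembly
    set Φ : (Fin m → ℝ) → ℝ := fun s => F (fun k => G k (diagCLM xw s)) with hΦdef
    have hΦsm : ContDiffOn ℝ (⊤ : ℕ∞) Φ S' :=
      hFG.comp ((diagCLM xw).contDiff.contDiffOn) (fun s hs => hs)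
    have hscale2 : pderivs (wordOf I) Φ W
        = ((wordOf I).map xw).prod
          * pderivs (wordOf I) (fun x' => F (fun k => G k x')) x := by
      have h8 := pderivs_comp_diag hUmo hFG xw (wordOf I) W (by rw [hΨW]; exact hx)
      rw [hΨW] at h8
      exact h8
    have prodxw : ((wordOf I).map xw).prod = ∏ j, (xw j) ^ (I j) := by
      rw [list_prod_map_count]
      exact Finset.prod_congr rfl (fun j _ => by rw [count_wordOf])
    have hmP : multiPDeriv I Φ W
        = (∏ j, (xw j) ^ (I j)) * multiPDeriv I (fun x' => F (fun k => G k x')) x := by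
      rw [multiPDeriv_eq_pderivs I Φ,
        multiPDeriv_eq_pderivs I (fun x' => F (fun k => G k x')), hscale2, prodxw]
    have hnormΦ : ‖multiPDeriv I Φ W‖
        = (∏ j, (|x j| / W j) ^ (I j))
          * ‖multiPDeriv I (fun x' => F (fun k => G k x')) x‖ := by
      rw [hmP, norm_mul, Real.norm_eq_abs, Finset.abs_prod]
      congr 1
      refine Finset.prod_congr rfl (fun j _ => ?_)
      rw [abs_pow]
      congr 1
      rw [abs_div, abs_of_pos (hWpos j)]
    have hWprod_eq : (∏ j, (W j) ^ (I j)) * (∏ j, (|x j| / W j) ^ (I j))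
        = ∏ j, |x j| ^ (I j) := by
      rw [← Finset.prod_mul_distrib]
      refine Finset.prod_congr rfl (fun j _ => ?_)
      rw [← mul_pow, mul_comm (W j), div_mul_cancel₀ _ (hWne j)]
    have hmPΦ : multiPDeriv I Φ W
        = iteratedFDerivWithin ℝ (wordOf I).length Φ S' W
          (fun l => Pi.single ((wordOf I).get l) 1) := by
      rw [multiPDeriv_eq_pderivs]
      exact pderivs_eq_iFD hS'o hΦsm (wordOf I) W hWS'
    have hnle : ‖multiPDeriv I Φ W‖ ≤ ‖iteratedFDerivWithin ℝ N Φ S' W‖ := by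
      rw [hmPΦ]
      have h6 := (iteratedFDerivWithin ℝ (wordOf I).length Φ S' W).le_opNorm
        (fun l => Pi.single ((wordOf I).get l) 1)
      have h7 : (∏ l : Fin (wordOf I).length, ‖(Pi.single ((wordOf I).get l) 1 : Fin m → ℝ)‖)
          = 1 :=
        Finset.prod_eq_one fun l _ => by rw [Pi.norm_single]; exact norm_one
      rw [h7, mul_one] at h6
      refine h6.trans (le_of_eq ?_)
      rw [length_wordOf]
    have hΦcomp : Φ = Fhat ∘ Ghat := by
      funext s
      show F (fun k => G k (diagCLM xw s)) = F (diagCLM u (Ghat s))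
      rw [hucancel s]
    have hcompbound : ‖iteratedFDerivWithin ℝ N (Fhat ∘ Ghat) S' W‖
        ≤ (N.factorial : ℝ) * (AF * ZF y * (n:ℝ)^N) * ((m:ℝ) * (2*AG+1))^N := by
      refine norm_iteratedFDerivWithin_comp_le hFhatSm hGhatSm (by exact_mod_cast le_top) hT'o.uniqueDiffOn
        hS'o.uniqueDiffOn hmapsGhat hWS' ?_ hD
      intro i hi
      rw [hGhatW]
      exact hC i hi
    have hWprod_nn : (0:ℝ) ≤ ∏ j, (W j) ^ (I j) :=
      Finset.prod_nonneg fun j _ => pow_nonneg (hWpos j).le _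
    calc (∏ j, |x j| ^ (I j)) * ‖multiPDeriv I (fun x' => F (fun k => G k x')) x‖
        = (∏ j, (W j) ^ (I j)) * ‖multiPDeriv I Φ W‖ := by
          rw [hnormΦ, ← hWprod_eq]; ring
      _ ≤ (∏ j, (W j) ^ (I j))
          * ((N.factorial : ℝ) * (AF * ZF y * (n:ℝ)^N) * ((m:ℝ) * (2*AG+1))^N) := by
          refine mul_le_mul_of_nonneg_left ?_ hWprod_nn
          refine hnle.trans ?_
          rw [hΦcomp]
          exact hcompbound
      _ = (N.factorial : ℝ) * AF * (n:ℝ)^N * ((m:ℝ) * (2*AG+1))^N * ZF y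
          * ∏ j, (H j + ε) ^ (I j) := by
          have hWH : (∏ j, (W j) ^ (I j)) = ∏ j, (H j + ε) ^ (I j) := rfl
          rw [hWH]; ring
  -- pass to the limit ε → 0⁺
  have hcont : ContinuousWithinAt
      (fun ε : ℝ => (N.factorial : ℝ) * AF * (n:ℝ)^N * ((m:ℝ) * (2*AG+1))^N * ZF y *
        ∏ j, (H j + ε) ^ (I j)) (Set.Ioi (0:ℝ)) 0 := by
    apply Continuous.continuousWithinAt
    exact continuous_const.mul
      (continuous_finset_prod _ fun j _ => (continuous_const.add continuous_id).pow _)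
  have hlim := ge_of_tendsto hcont.tendsto
    (Filter.eventually_of_mem self_mem_nhdsWithin (fun ε hε => key ε hε))
  simpa using hlim
end

section
/- Let v be a complex number with Re(v) > −1/2 and let i ≥ 0 be an integer. Then there is a constant C, depending only on v and i, such that for all real x with 0 < x ≤ 10 one has |x^i · (d/dx)^i J_v(x)| ≤ C · x^{Re(v)}. -/
open scoped BigOperators
/-- Bessel function of the first kind `J_v(x)` for `x > 0` and `Re v > -1/2`, defined by
the series `J_v(x) = ∑_{m≥0} ((−1)^m/(m!·Γ(m+v+1)))·(x/2)^{2m+v}` with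
`(x/2)^w := exp(w·log(x/2))` (real logarithm). -/
noncomputable def besselJ (v : ℂ) (x : ℝ) : ℂ :=
  ∑' m : ℕ, ((-1) ^ m / ((m.factorial : ℂ) * Complex.Gamma ((m : ℂ) + v + 1))) *
    Complex.exp ((2 * (m : ℂ) + v) * (Real.log (x / 2) : ℂ))

/-
On `x > 0` the series factors as `J_v(x) = (x/2)^v · F(-x²/4)`, where `F` is the regularized
hypergeometric function `₀F̃₁(; v + 1; ·)`, which is entire. Differentiating `(x/2)^v · q(x)` and
multiplying by `x` only multiplies `q` by `v` and adds `x q'`, so by induction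
`x^i J_v^(i)(x) = (x/2)^v · p_i(x)` with `p_i` smooth on all of `ℝ`. Hence `p_i` is bounded on
`[0, 10]`, and `‖(x/2)^v‖ = (x/2)^(Re v)`.
-/

open Complex Filter Set
open scoped ContDiff

theorem Complex.analyticOnNhd_regularizedHGFun {a b : Multiset ℂ} (h : a.card ≤ b.card) :
    AnalyticOnNhd ℂ (regularizedHGFun a b) univ := by
  have hp := (regularizedHGFunSeries a b).hasFPowerSeriesOnBall
    (by rw [radius_regularizedHGFunSeries_eq_top h]; exact ENNReal.zero_lt_top)
  rw [radius_regularizedHGFunSeries_eq_top h] at hp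
  have := hp.analyticOnNhd
  rwa [Metric.eball_top] at this

noncomputable def halfCpow (v : ℂ) (x : ℝ) : ℂ := cexp (v * Real.log (x / 2))

theorem norm_halfCpow (v : ℂ) {x : ℝ} (hx : 0 < x) : ‖halfCpow v x‖ = (x / 2) ^ v.re := by
  rw [halfCpow, norm_exp, Real.rpow_def_of_pos (by positivity), re_mul_ofReal, mul_comm]

theorem hasDerivAt_halfCpow (v : ℂ) {x : ℝ} (hx : 0 < x) :
    HasDerivAt (halfCpow v) (v * (x : ℂ)⁻¹ * halfCpow v x) x := by
  have hlog : HasDerivAt (fun y : ℝ => Real.log (y / 2)) x⁻¹ x :=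
    (((hasDerivAt_id x).div_const 2).log (by positivity)).congr_deriv (by simp; field_simp)
  exact (hlog.ofReal_comp.const_mul v).cexp.congr_deriv (by rw [halfCpow, ofReal_inv]; ring)

theorem contDiffOn_halfCpow (v : ℂ) : ContDiffOn ℝ ∞ (halfCpow v) (Ioi 0) := by
  intro x (hx : 0 < x)
  unfold halfCpow
  have : ContDiffAt ℝ ∞ (fun y : ℝ => Real.log (y / 2)) x :=
    (Real.contDiffAt_log.2 (by positivity)).comp x (contDiffAt_id.div_const _)
  exact (contDiff_exp.contDiffAt.comp x
    (contDiffAt_const.mul (ofRealCLM.contDiff.contDiffAt.comp x this))).contDiffWithinAt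

theorem besselJ_eqOn (v : ℂ) :
    EqOn (besselJ v) (fun x => halfCpow v x * regularizedHGFun 0 {v + 1} (-((x : ℂ) / 2) ^ 2))
      (Ioi 0) := by
  intro x (hx : 0 < x)
  have hpow (m : ℕ) : cexp (2 * m * Real.log (x / 2)) = ((x : ℂ) / 2) ^ (2 * m) := by
    have hexp : cexp (Real.log (x / 2)) = (x : ℂ) / 2 := by
      rw [← ofReal_exp, Real.exp_log (by positivity)]; push_cast; rfl
    rw [show 2 * (m : ℂ) * Real.log (x / 2) = ((2 * m : ℕ) : ℂ) * Real.log (x / 2) by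
      push_cast; ring, exp_nat_mul, hexp]
  change _ = halfCpow v x * FormalMultilinearSeries.ofScalarsSum
    (regularizedHGFunCoeff 0 {v + 1}) (-((x : ℂ) / 2) ^ 2)
  rw [besselJ, FormalMultilinearSeries.ofScalars_sum_eq, ← tsum_mul_left]
  refine tsum_congr fun m => ?_
  rw [regularizedHGFunCoeff, halfCpow, add_mul, exp_add, hpow, Multiset.map_zero,
    Multiset.prod_zero, Multiset.map_singleton, Multiset.prod_singleton, smul_eq_mul,
    neg_pow (((x : ℂ) / 2) ^ 2), ← pow_mul, show v + 1 + (m : ℂ) = m + v + 1 by ring]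
  ring

/-- The recursion comes from `x^(k+1) f^(k+1) = x (x^k f^(k))' - k x^k f^(k)` applied to
`f = (x/2)^v · q`. -/
noncomputable def eulerIter (v : ℂ) (q : ℝ → ℂ) : ℕ → ℝ → ℂ
  | 0 => q
  | k + 1 => fun x => (v - k) * eulerIter v q k x + x * deriv (eulerIter v q k) x

theorem contDiff_eulerIter {q : ℝ → ℂ} (hq : ContDiff ℝ ∞ q) (v : ℂ) :
    ∀ k, ContDiff ℝ ∞ (eulerIter v q k)
  | 0 => hq
  | k + 1 => by
    have h := contDiff_eulerIter hq v k
    exact (contDiff_const.mul h).add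
      (ofRealCLM.contDiff.mul (contDiff_infty_iff_deriv.mp h).2)

theorem pow_mul_iteratedDeriv_halfCpow_mul {q : ℝ → ℂ} (hq : ContDiff ℝ ∞ q) (v : ℂ) (k : ℕ)
    {x : ℝ} (hx : 0 < x) :
    (x : ℂ) ^ k * iteratedDeriv k (fun y => halfCpow v y * q y) x =
      halfCpow v x * eulerIter v q k x := by
  induction k generalizing x with
  | zero => simp [eulerIter]
  | succ k ih =>
    set f := fun y => halfCpow v y * q y
    set p := eulerIter v q k
    have hp : HasDerivAt p (deriv p x) x :=
      ((contDiff_eulerIter hq v k).differentiable (by simp) x).hasDerivAt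
    have hf : DifferentiableAt ℝ (iteratedDeriv k f) x := by
      have hsmooth : ContDiffOn ℝ ∞ f (Ioi 0) := (contDiffOn_halfCpow v).mul hq.contDiffOn
      refine ((hsmooth.differentiableOn_iteratedDerivWithin (mod_cast ENat.natCast_lt_top k)
        (uniqueDiffOn_Ioi 0)).congr fun y hy => ?_).differentiableAt (Ioi_mem_nhds hx)
      exact (iteratedDerivWithin_of_isOpen isOpen_Ioi hy).symm
    have h1 : HasDerivAt (fun y : ℝ => (y : ℂ) ^ k * iteratedDeriv k f y)
        (k * x ^ (k - 1) * iteratedDeriv k f x + x ^ k * iteratedDeriv (k + 1) f x) x := by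
      rw [iteratedDeriv_succ]
      exact ((hasDerivAt_pow k (x : ℂ)).comp_ofReal).mul hf.hasDerivAt
    have h2 : HasDerivAt (fun y : ℝ => (y : ℂ) ^ k * iteratedDeriv k f y)
        (v * (x : ℂ)⁻¹ * halfCpow v x * p x + halfCpow v x * deriv p x) x :=
      ((hasDerivAt_halfCpow v hx).mul hp).congr_of_eventuallyEq
        (eventually_of_mem (Ioi_mem_nhds hx) fun y hy => ih hy)
    have hk : (x : ℂ) * (k * x ^ (k - 1)) = k * x ^ k := by
      cases k <;> simp [pow_succ]; ring
    have hxinv : (x : ℂ) * (x : ℂ)⁻¹ = 1 := mul_inv_cancel₀ (ofReal_ne_zero.mpr hx.ne')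
    simp only [eulerIter]
    linear_combination (x : ℂ) * h1.unique h2 - iteratedDeriv k f x * hk - k * ih hx
      + v * halfCpow v x * p x * hxinv

theorem besselJ_deriv_bound_general (v : ℂ) (i : ℕ) :
    ∃ C : ℝ, ∀ x : ℝ, 0 < x → x ≤ 10 →
      ‖(x : ℂ) ^ i * iteratedDeriv i (besselJ v) x‖ ≤ C * x ^ v.re := by
  set q : ℝ → ℂ := fun y => regularizedHGFun 0 {v + 1} (-((y : ℂ) / 2) ^ 2)
  have hq : ContDiff ℝ ∞ q :=
    ((analyticOnNhd_regularizedHGFun (by simp)).contDiff.restrict_scalars ℝ).comp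
      ((ofRealCLM.contDiff.div_const 2).pow 2).neg
  obtain ⟨M, hM⟩ := isCompact_Icc.exists_bound_of_continuousOn
    (contDiff_eulerIter hq v i).continuous.continuousOn (s := Icc 0 10)
  refine ⟨M / 2 ^ v.re, fun x hx hx10 => ?_⟩
  rw [(besselJ_eqOn v).iteratedDeriv_of_isOpen isOpen_Ioi i hx,
    pow_mul_iteratedDeriv_halfCpow_mul hq v i hx, norm_mul, norm_halfCpow v hx,
    Real.div_rpow hx.le zero_le_two]
  calc x ^ v.re / 2 ^ v.re * ‖eulerIter v q i x‖ ≤ x ^ v.re / 2 ^ v.re * M := by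
        gcongr; exact hM x ⟨hx.le, hx10⟩
    _ = M / 2 ^ v.re * x ^ v.re := by ring

/-- for `Re v > −1/2` and `i ≥ 0`, `x^i J_v^{(i)}(x) ≪_{v,i} x^{Re v}` for
`0 < x ≤ 10`. -/
theorem besselJ_deriv_bound (v : ℂ) (hv : -1/2 < v.re) (i : ℕ) :
    ∃ C : ℝ, ∀ x : ℝ, 0 < x → x ≤ 10 →
      ‖(x : ℂ) ^ i * iteratedDeriv i (besselJ v) x‖ ≤ C * x ^ v.re :=
  besselJ_deriv_bound_general v i
end

section
/- For every ε > 0 there is a constant C_ε with the following property. For all real numbers H ≥ 1 and D₀ ≥ 1 and every positive integer R, ∑_{h=1}^{⌊H⌋} ( ∑_{s | h} ∑_{d ∈ ℕ, D₀ ≤ d ≤ 2D₀, s | dR} s/(dR) )² ≤ C_ε · H · (H · D₀ · R)^ε, where the middle sum runs over the positive divisors s of h and the inner sum runs over positive integers d in [D₀, 2D₀] such that s divides dR. -/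
open scoped BigOperators Classical

/-!
Each inner sum is at most `2`: if `s ∣ dR` then `s / gcd(s, R)` divides `d`, so at most
`2D₀ gcd(s, R) / s` values of `d` contribute, each at most `s / (D₀R)`. Hence the summand is at
most `4 τ(h)²`. Finally `τ(h)² ≤ #{(a, b, c) : abc ∣ h}` via `(s, t) ↦ (g, s/g, t/g)` with
`g = gcd(s, t)`, and summing over `h ≤ H` gives `∑ H/(abc) ≤ H (1 + log H)³ ≪_ε H^{1+ε}`.
-/

open Finset Real

theorem card_Icc_filter_dvd (N e : ℕ) : #{d ∈ Icc 1 N | e ∣ d} = N / e := by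
  rw [← Nat.Ioc_filter_dvd_card_eq_div, ← Icc_add_one_left_eq_Ioc, zero_add]

theorem sum_Icc_card_filter_dvd {ι : Type*} (S : Finset ι) (k : ι → ℕ) (N : ℕ) :
    ∑ h ∈ Icc 1 N, #{x ∈ S | k x ∣ h} = ∑ x ∈ S, N / k x := by
  simp only [card_filter]
  rw [sum_comm]
  refine sum_congr rfl fun x _ => ?_
  rw [← card_filter, card_Icc_filter_dvd]

theorem sum_piFinset_Icc_inv_prod (n N : ℕ) :
    ∑ x ∈ Fintype.piFinset (fun _ : Fin n => Icc 1 N), ((∏ i, x i : ℕ) : ℝ)⁻¹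
      = (harmonic N : ℝ) ^ n := by
  rw [harmonic_eq_sum_Icc, Rat.cast_sum, sum_pow']
  push_cast
  simp [prod_inv_distrib]

theorem sum_card_filter_prod_dvd_le (n : ℕ) {x : ℝ} (hx : 1 ≤ x) :
    ∑ h ∈ Icc 1 ⌊x⌋₊,
        (#{t ∈ Fintype.piFinset (fun _ : Fin n => Icc 1 ⌊x⌋₊) | ∏ i, t i ∣ h} : ℝ)
      ≤ x * (1 + log x) ^ n := by
  have hN : 1 ≤ ⌊x⌋₊ := Nat.one_le_floor_iff x |>.mpr hx
  have hNx : (⌊x⌋₊ : ℝ) ≤ x := Nat.floor_le (by linarith)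
  have harm : (harmonic ⌊x⌋₊ : ℝ) ≤ 1 + log x :=
    (harmonic_le_one_add_log _).trans (by gcongr)
  rw [← Nat.cast_sum, sum_Icc_card_filter_dvd, Nat.cast_sum]
  calc ∑ t ∈ Fintype.piFinset (fun _ : Fin n => Icc 1 ⌊x⌋₊), ((⌊x⌋₊ / ∏ i, t i : ℕ) : ℝ)
      ≤ ∑ t ∈ Fintype.piFinset (fun _ : Fin n => Icc 1 ⌊x⌋₊), ⌊x⌋₊ * ((∏ i, t i : ℕ) : ℝ)⁻¹ :=
        sum_le_sum fun t _ => Nat.cast_div_le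
    _ = ⌊x⌋₊ * (harmonic ⌊x⌋₊ : ℝ) ^ n := by rw [← mul_sum, sum_piFinset_Icc_inv_prod]
    _ ≤ x * (1 + log x) ^ n := by
        have : (0 : ℝ) ≤ harmonic ⌊x⌋₊ := by exact_mod_cast (harmonic_pos (by omega)).le
        gcongr

theorem card_divisors_sq_le_card_filter_prod_dvd {h N : ℕ} (hh : 0 < h) (hN : h ≤ N) :
    #h.divisors ^ 2 ≤ #{t ∈ Fintype.piFinset (fun _ : Fin 3 => Icc 1 N) | ∏ i, t i ∣ h} := by
  rw [sq, ← card_product]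
  refine card_le_card_of_injOn
    (fun p => ![p.1.gcd p.2, p.1 / p.1.gcd p.2, p.2 / p.1.gcd p.2]) ?_ ?_
  · rintro ⟨s, t⟩ hst
    simp only [coe_product, Set.mem_prod, mem_coe, Nat.mem_divisors] at hst
    obtain ⟨⟨hs, -⟩, ht, -⟩ := hst
    have hs0 : 0 < s := Nat.pos_of_dvd_of_pos hs hh
    have ht0 : 0 < t := Nat.pos_of_dvd_of_pos ht hh
    have hsN : s ≤ N := (Nat.le_of_dvd hh hs).trans hN
    have htN : t ≤ N := (Nat.le_of_dvd hh ht).trans hN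
    have hgs := Nat.gcd_dvd_left s t
    have hgt := Nat.gcd_dvd_right s t
    have hg : 0 < s.gcd t := Nat.gcd_pos_of_pos_left t hs0
    have hgs' := Nat.le_of_dvd hs0 hgs
    have hgt' := Nat.le_of_dvd ht0 hgt
    simp only [coe_filter, Set.mem_ofPred_eq, Fintype.mem_piFinset, mem_Icc]
    refine ⟨fun i => ?_, ?_⟩
    · fin_cases i <;> simp only [Fin.zero_eta, Fin.mk_one, Fin.reduceFinMk, Matrix.cons_val]
      · omega
      · exact ⟨Nat.div_pos hgs' hg, (Nat.div_le_self s _).trans hsN⟩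
      · exact ⟨Nat.div_pos hgt' hg, (Nat.div_le_self t _).trans htN⟩
    · rw [Fin.prod_univ_three]
      simp only [Matrix.cons_val]
      rw [Nat.mul_div_cancel' hgs, ← Nat.mul_div_assoc _ hgt]
      exact Nat.lcm_dvd hs ht
  · rintro ⟨s, t⟩ - ⟨s', t'⟩ - heq
    have h0 := congrFun heq 0
    have h1 := congrFun heq 1
    have h2 := congrFun heq 2
    simp only [Matrix.cons_val] at h0 h1 h2
    refine Prod.ext ?_ ?_
    · rw [← Nat.mul_div_cancel' (Nat.gcd_dvd_left s t), h1, h0,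
        Nat.mul_div_cancel' (Nat.gcd_dvd_left s' t')]
    · rw [← Nat.mul_div_cancel' (Nat.gcd_dvd_right s t), h2, h0,
        Nat.mul_div_cancel' (Nat.gcd_dvd_right s' t')]

theorem sum_card_divisors_sq_le {x : ℝ} (hx : 1 ≤ x) :
    ∑ h ∈ Icc 1 ⌊x⌋₊, (#h.divisors : ℝ) ^ 2 ≤ x * (1 + log x) ^ 3 := by
  refine le_trans (sum_le_sum fun h hh => ?_) (sum_card_filter_prod_dvd_le 3 hx)
  obtain ⟨h1, hhx⟩ := mem_Icc.mp hh
  exact_mod_cast card_divisors_sq_le_card_filter_prod_dvd h1 hhx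

theorem div_gcd_dvd_of_dvd_mul {s d R : ℕ} (hs : 0 < s) (h : s ∣ d * R) : s / s.gcd R ∣ d := by
  have hg : 0 < s.gcd R := Nat.gcd_pos_of_pos_left R hs
  refine (Nat.coprime_div_gcd_div_gcd hg).dvd_of_dvd_mul_right ?_
  rw [← Nat.mul_div_assoc d (Nat.gcd_dvd_right s R)]
  exact Nat.div_dvd_div (Nat.gcd_dvd_left s R) h

theorem card_Icc_filter_dvd_mul_le (M R : ℕ) {s : ℕ} (hs : 0 < s) :
    (#{d ∈ Icc 1 M | s ∣ d * R} : ℝ) ≤ M * s.gcd R / s := by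
  have hsub : {d ∈ Icc 1 M | s ∣ d * R} ⊆ {d ∈ Icc 1 M | s / s.gcd R ∣ d} :=
    monotone_filter_right _ fun d _ => div_gcd_dvd_of_dvd_mul hs
  have hs' : (s : ℝ) = s.gcd R * (s / s.gcd R : ℕ) := by
    exact_mod_cast (Nat.mul_div_cancel' (Nat.gcd_dvd_left s R)).symm
  calc (#{d ∈ Icc 1 M | s ∣ d * R} : ℝ) ≤ (M / (s / s.gcd R) : ℕ) := by
        rw [← card_Icc_filter_dvd]; exact_mod_cast card_le_card hsub
    _ ≤ M / (s / s.gcd R : ℕ) := Nat.cast_div_le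
    _ = M * s.gcd R / s := by
        have hg : (s.gcd R : ℝ) ≠ 0 := by exact_mod_cast (Nat.gcd_pos_of_pos_left R hs).ne'
        rw [hs', mul_comm (M : ℝ), mul_div_mul_left _ _ hg]

theorem sum_filter_div_mul_le_two {D₀ : ℝ} (hD : 0 < D₀) {R s : ℕ} (hR : 0 < R) (hs : 0 < s) :
    ∑ d ∈ (Icc 1 ⌊2 * D₀⌋₊).filter (fun d : ℕ => D₀ ≤ (d : ℝ) ∧ s ∣ d * R),
      (s : ℝ) / (d * R) ≤ 2 := by
  set S := (Icc 1 ⌊2 * D₀⌋₊).filter (fun d : ℕ => D₀ ≤ (d : ℝ) ∧ s ∣ d * R)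
  have hcard : (#S : ℝ) ≤ 2 * D₀ * s.gcd R / s := by
    refine le_trans ?_ ((card_Icc_filter_dvd_mul_le ⌊2 * D₀⌋₊ R hs).trans ?_)
    · exact_mod_cast card_le_card (monotone_filter_right _ fun d _ (hd : _ ∧ _) => hd.2)
    · gcongr; exact Nat.floor_le (by positivity)
  have hR' : (0 : ℝ) < R := by exact_mod_cast hR
  have hgR : (s.gcd R : ℝ) ≤ R := by exact_mod_cast Nat.le_of_dvd hR (Nat.gcd_dvd_right s R)
  calc ∑ d ∈ S, (s : ℝ) / (d * R) ≤ #S • ((s : ℝ) / (D₀ * R)) :=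
        sum_le_card_nsmul _ _ _ fun d hd => by gcongr; exact (mem_filter.mp hd).2.1
    _ ≤ 2 * D₀ * s.gcd R / s * (s / (D₀ * R)) := by rw [nsmul_eq_mul]; gcongr
    _ = 2 * (s.gcd R / R) := by field_simp
    _ ≤ 2 := by linarith [div_le_one_of_le₀ hgR hR'.le]

theorem one_add_log_pow_le_mul_rpow (n : ℕ) {x ε : ℝ} (hx : 1 ≤ x) (hε : 0 < ε) :
    (1 + log x) ^ n ≤ (1 + n / ε) ^ n * x ^ ε := by
  obtain rfl | hn := n.eq_zero_or_pos
  · simpa using one_le_rpow hx hε.le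
  have hδ : 0 < ε / n := by positivity
  have hbase : 1 + log x ≤ (1 + n / ε) * x ^ (ε / n) := by
    have hlog : log x ≤ n / ε * x ^ (ε / n) :=
      (log_le_rpow_div (by linarith) hδ).trans_eq (by field_simp)
    nlinarith [one_le_rpow hx hδ.le]
  calc (1 + log x) ^ n ≤ ((1 + n / ε) * x ^ (ε / n)) ^ n :=
        pow_le_pow_left₀ (by linarith [log_nonneg hx]) hbase n
    _ = (1 + n / ε) ^ n * x ^ ε := by
        rw [mul_pow, ← rpow_natCast (x ^ (ε / n)), ← rpow_mul (by linarith)]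
        field_simp

/-- `∑_{h≤H} (∑_{s|h} ∑_{d∈[D₀,2D₀], s|dR} s/(dR))² ≪_ε H(HD₀R)^ε`. -/
theorem divisor_sum_square_bound :
    ∀ ε : ℝ, 0 < ε → ∃ Cε : ℝ,
      ∀ (H D₀ : ℝ) (R : ℕ), 1 ≤ H → 1 ≤ D₀ → 0 < R →
        ∑ h ∈ Finset.Icc 1 ⌊H⌋₊,
          (∑ s ∈ h.divisors,
            ∑ d ∈ (Finset.Icc 1 ⌊2 * D₀⌋₊).filter (fun d : ℕ => D₀ ≤ (d : ℝ) ∧ (s ∣ (d * R : ℕ))),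
              (s : ℝ) / ((d : ℝ) * (R : ℝ))) ^ 2
          ≤ Cε * H * (H * D₀ * (R : ℝ)) ^ ε := by
  intro ε hε
  refine ⟨4 * (1 + 3 / ε) ^ 3, fun H D₀ R hH hD hR => ?_⟩
  have hHDR : H ≤ H * D₀ * R := by
    rw [mul_assoc]
    exact le_mul_of_one_le_right (by linarith)
      (one_le_mul_of_one_le_of_one_le hD (by exact_mod_cast hR))
  calc _ ≤ ∑ h ∈ Icc 1 ⌊H⌋₊, (∑ s ∈ h.divisors, (2 : ℝ)) ^ 2 := by
        gcongr with h _ s hs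
        exact sum_filter_div_mul_le_two (by linarith) hR (Nat.pos_of_mem_divisors hs)
    _ = 4 * ∑ h ∈ Icc 1 ⌊H⌋₊, (#h.divisors : ℝ) ^ 2 := by
        simp only [sum_const, nsmul_eq_mul, mul_sum]
        ring_nf
    _ ≤ 4 * (H * ((1 + 3 / ε) ^ 3 * H ^ ε)) := by
        grw [sum_card_divisors_sq_le hH, one_add_log_pow_le_mul_rpow 3 hH hε]
        norm_num
    _ = 4 * (1 + 3 / ε) ^ 3 * H * H ^ ε := by ring
    _ ≤ 4 * (1 + 3 / ε) ^ 3 * H * (H * D₀ * R) ^ ε := by gcongr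
end
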